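/- arXiv:2312.12388 — 3 statements merged into one kernel-verified Lean document; each statement's English description precedes it below -/
import Mathlib

section
/- Let g = (g_x, g⁺, g⁻) ∈ ℤ^{m+2n} with entries in {-1,0,1} satisfy [A_G | -I | I] g = 0 and be support-minimal in this kernel (a circuit of the pseudoflow polyhedron). Then g is exactly one of: (i) a cycle circuit ±(C, 0, 0) where C is the signed incidence vector of a simple undirected cycle in G; (ii) a path circuit of one of the four forms ±(H_{ij}, e_i, e_j), ±(H_{ij}, e_i - e_j, 0), ±(H_{ij}, 0, -e_i + e_j), ±(H_{ij}, -e_j, -e_i) where H_{ij} is the signed incidence vector of a simple undirected path from node i to node j in G; or (iii) a trivial circuit ±(0, e_i, e_i) for some node i. -/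
def incidence {n m : ℕ} (tail head : Fin m → Fin n) : Matrix (Fin n) (Fin m) ℝ :=
  fun i e => (if tail e = i then 1 else 0) - (if head e = i then 1 else 0)

/-- The equality-constraint matrix `F = [A_G | -I | I]` of the pseudoflow polyhedron. -/
def Fmat {n m : ℕ} (A : Matrix (Fin n) (Fin m) ℝ) :
    Matrix (Fin n) (Fin m ⊕ Fin n ⊕ Fin n) ℝ :=
  fun i => Sum.elim (fun e => A i e)
    (Sum.elim (fun j => if i = j then -1 else 0) (fun j => if i = j then 1 else 0))

/-- `g` is a circuit of the pseudoflow polyhedron: nonzero integer kernel element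
of `[A_G | -I | I]` with coprime entries and support minimal in the kernel. -/
def IsCircuitOf {n m : ℕ} (A : Matrix (Fin n) (Fin m) ℝ)
    (g : Fin m ⊕ Fin n ⊕ Fin n → ℤ) : Prop :=
  g ≠ 0 ∧
  (Fmat A).mulVec (fun v => (g v : ℝ)) = 0 ∧
  Finset.univ.gcd (fun v => (g v).natAbs) = 1 ∧
  ∀ h : Fin m ⊕ Fin n ⊕ Fin n → ℝ, h ≠ 0 → (Fmat A).mulVec h = 0 →
    {v | h v ≠ 0} ⊆ {v | g v ≠ 0} → {v | g v ≠ 0} ⊆ {v | h v ≠ 0}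

structure SimplePath (n m : ℕ) (tail head : Fin m → Fin n) (r : ℕ) where
  arc : Fin r → Fin m
  sign : Fin r → ℤ
  vert : Fin (r + 1) → Fin n
  arc_inj : Function.Injective arc
  vert_inj : Function.Injective vert
  step : ∀ k : Fin r,
    (sign k = 1 ∧ tail (arc k) = vert k.castSucc ∧ head (arc k) = vert k.succ) ∨
    (sign k = -1 ∧ tail (arc k) = vert k.succ ∧ head (arc k) = vert k.castSucc)

def SimplePath.vec {n m r : ℕ} {tail head : Fin m → Fin n}
    (H : SimplePath n m tail head r) : Fin m → ℤ :=
  fun e => ∑ k : Fin r, if H.arc k = e then H.sign k else 0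

structure SimpleCycle (n m : ℕ) (tail head : Fin m → Fin n) (r : ℕ) where
  hr : 0 < r
  arc : Fin r → Fin m
  sign : Fin r → ℤ
  vert : Fin r → Fin n
  arc_inj : Function.Injective arc
  vert_inj : Function.Injective vert
  step : ∀ k : Fin r,
    (sign k = 1 ∧ tail (arc k) = vert k ∧
      head (arc k) = vert ⟨(k.val + 1) % r, Nat.mod_lt _ hr⟩) ∨
    (sign k = -1 ∧ tail (arc k) = vert ⟨(k.val + 1) % r, Nat.mod_lt _ hr⟩ ∧
      head (arc k) = vert k)

def SimpleCycle.vec {n m r : ℕ} {tail head : Fin m → Fin n}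
    (C : SimpleCycle n m tail head r) : Fin m → ℤ :=
  fun e => ∑ k : Fin r, if C.arc k = e then C.sign k else 0


namespace CircuitAux

/-- mod-arithmetic helper: rotating forward then back. -/
lemma rot_back {r : ℕ} (hr : 0 < r) (a : ℕ) (ha : a < r) :
    ((a + 1) % r + (r - 1)) % r = a := by
  rw [Nat.mod_add_mod]
  have h1 : a + 1 + (r - 1) = a + r := by omega
  rw [h1, Nat.add_mod_right, Nat.mod_eq_of_lt ha]

set_option linter.unusedSectionVars false

variable {V E : Type} [Fintype V] [DecidableEq V] [Fintype E] [DecidableEq E]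

/-- signed incidence of the abstract digraph `(t, h)`. -/
def inc (t h : E → V) (v : V) (a : E) : ℤ :=
  (if t a = v then 1 else 0) - (if h a = v then 1 else 0)

structure GCycle (t h : E → V) (r : ℕ) where
  hr : 0 < r
  arc : Fin r → E
  sign : Fin r → ℤ
  vert : Fin r → V
  arc_inj : Function.Injective arc
  vert_inj : Function.Injective vert
  step : ∀ k : Fin r,
    (sign k = 1 ∧ t (arc k) = vert k ∧ h (arc k) = vert ⟨(k.val + 1) % r, Nat.mod_lt _ hr⟩) ∨
    (sign k = -1 ∧ t (arc k) = vert ⟨(k.val + 1) % r, Nat.mod_lt _ hr⟩ ∧ h (arc k) = vert k)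

variable {t h : E → V} {r : ℕ}

def GCycle.vec (C : GCycle t h r) : E → ℤ :=
  fun a => ∑ k : Fin r, if C.arc k = a then C.sign k else 0

def rot (hr : 0 < r) (k : Fin r) : Fin r := ⟨(k.val + 1) % r, Nat.mod_lt _ hr⟩

def rot' (hr : 0 < r) (k : Fin r) : Fin r :=
  ⟨(k.val + (r - 1)) % r, Nat.mod_lt _ hr⟩

lemma rot'_rot (hr : 0 < r) (k : Fin r) : rot' hr (rot hr k) = k := by
  apply Fin.ext
  exact rot_back hr k.val k.isLt

lemma rot_bij (hr : 0 < r) : Function.Bijective (rot hr) :=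
  (Finite.injective_iff_bijective).mp (Function.LeftInverse.injective (rot'_rot hr))

lemma rot_eq_iff (hr : 0 < r) (k j : Fin r) : rot hr k = j ↔ k = rot' hr j := by
  constructor
  · rintro rfl; exact (rot'_rot hr k).symm
  · rintro rfl
    obtain ⟨a, ha⟩ := (rot_bij hr).2 j
    rw [← ha, rot'_rot]

lemma GCycle.sign_cases (C : GCycle t h r) (k : Fin r) : C.sign k = 1 ∨ C.sign k = -1 := by
  rcases C.step k with ⟨h1, _⟩ | ⟨h1, _⟩
  · exact Or.inl h1
  · exact Or.inr h1

lemma GCycle.sign_mul_self (C : GCycle t h r) (k : Fin r) : C.sign k * C.sign k = 1 := by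
  rcases C.sign_cases k with h1 | h1 <;> rw [h1] <;> ring

lemma GCycle.vec_arc (C : GCycle t h r) (k : Fin r) : C.vec (C.arc k) = C.sign k := by
  unfold GCycle.vec
  rw [Finset.sum_congr rfl (fun j _ => by
    rw [show (if C.arc j = C.arc k then C.sign j else 0) = if j = k then C.sign j else 0 from by
      congr 1; simp [C.arc_inj.eq_iff]])]
  simp

lemma GCycle.vec_not_mem (C : GCycle t h r) (a : E) (ha : ∀ k, C.arc k ≠ a) : C.vec a = 0 := by
  unfold GCycle.vec
  exact Finset.sum_eq_zero (fun k _ => by simp [ha k])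

/-- uniform incidence formula for a cycle arc. -/
lemma GCycle.inc_arc (C : GCycle t h r) (v : V) (k : Fin r) :
    inc t h v (C.arc k) =
      C.sign k * ((if C.vert k = v then 1 else 0) - (if C.vert (rot C.hr k) = v then 1 else 0)) := by
  have hrk : rot C.hr k = ⟨(k.val + 1) % r, Nat.mod_lt _ C.hr⟩ := rfl
  rcases C.step k with ⟨h1, h2, h3⟩ | ⟨h1, h2, h3⟩ <;> rw [inc, h1, h2, h3, hrk] <;> ring


/-- the cycle vector satisfies conservation at every node. -/
lemma GCycle.cons_vec (C : GCycle t h r) (v : V) :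
    ∑ a : E, inc t h v a * C.vec a = 0 := by
  have swap : ∑ a : E, inc t h v a * C.vec a
      = ∑ k : Fin r, inc t h v (C.arc k) * C.sign k := by
    unfold GCycle.vec
    simp_rw [Finset.mul_sum]
    rw [Finset.sum_comm]
    apply Finset.sum_congr rfl
    intro k _
    have : ∀ x : E, inc t h v x * (if C.arc k = x then C.sign k else 0)
        = (if C.arc k = x then inc t h v x * C.sign k else 0) := by
      intro x; split <;> simp
    simp_rw [this]
    rw [Finset.sum_ite_eq]
    simp
  rw [swap]
  have step : ∀ k : Fin r, inc t h v (C.arc k) * C.sign k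
      = (if C.vert k = v then (1:ℤ) else 0) - (if C.vert (rot C.hr k) = v then 1 else 0) := by
    intro k
    rw [C.inc_arc v k]
    rcases C.sign_cases k with hs | hs <;> rw [hs] <;> ring
  simp_rw [step]
  rw [Finset.sum_sub_distrib]
  rw [Fintype.sum_bijective (rot C.hr) (rot_bij C.hr)
    (fun k => if C.vert (rot C.hr k) = v then (1:ℤ) else 0)
    (fun k => if C.vert k = v then (1:ℤ) else 0) (fun k => rfl)]
  simp

/-- a conservative integer vector supported on the arcs of a cycle is an
integer multiple of the cycle vector. -/
lemma GCycle.eq_smul_vec (C : GCycle t h r) (g : E → ℤ)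
    (hc : ∀ v : V, ∑ a : E, inc t h v a * g a = 0)
    (hsupp : ∀ a : E, g a ≠ 0 → ∃ k, C.arc k = a) :
    ∀ a : E, g a = (C.sign ⟨0, C.hr⟩ * g (C.arc ⟨0, C.hr⟩)) * C.vec a := by
  set F : Fin r → ℤ := fun k => C.sign k * g (C.arc k) with hF
  have key : ∀ j : Fin r, F j = F (rot' C.hr j) := by
    intro j
    have hj := hc (C.vert j)
    have restrict : ∑ a : E, inc t h (C.vert j) a * g a
        = ∑ k : Fin r, inc t h (C.vert j) (C.arc k) * g (C.arc k) := by
      have him : ∑ a ∈ Finset.univ.image C.arc, inc t h (C.vert j) a * g a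
          = ∑ k : Fin r, inc t h (C.vert j) (C.arc k) * g (C.arc k) :=
        Finset.sum_image (fun a _ b _ hab => C.arc_inj hab)
      rw [← him]
      apply (Finset.sum_subset (Finset.subset_univ _) _).symm
      intro a _ ha
      have : g a = 0 := by
        by_contra hne
        obtain ⟨k, hk⟩ := hsupp a hne
        exact ha (Finset.mem_image.mpr ⟨k, Finset.mem_univ _, hk⟩)
      rw [this, mul_zero]
    rw [restrict] at hj
    have expand : ∀ k : Fin r, inc t h (C.vert j) (C.arc k) * g (C.arc k)
        = F k * (if k = j then (1:ℤ) else 0) - F k * (if rot C.hr k = j then 1 else 0) := by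
      intro k
      rw [C.inc_arc (C.vert j) k, hF]
      have e1 : (if C.vert k = C.vert j then (1:ℤ) else 0) = (if k = j then 1 else 0) := by
        congr 1; simp [C.vert_inj.eq_iff]
      have e2 : (if C.vert (rot C.hr k) = C.vert j then (1:ℤ) else 0)
          = (if rot C.hr k = j then 1 else 0) := by
        congr 1; simp [C.vert_inj.eq_iff]
      rw [e1, e2]; ring
    simp_rw [expand] at hj
    rw [Finset.sum_sub_distrib] at hj
    have s1 : ∑ k : Fin r, F k * (if k = j then (1:ℤ) else 0) = F j := by
      simp [Finset.sum_ite_eq']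
    have s2 : ∑ k : Fin r, F k * (if rot C.hr k = j then (1:ℤ) else 0) = F (rot' C.hr j) := by
      have : ∀ k : Fin r, (if rot C.hr k = j then (1:ℤ) else 0)
          = (if k = rot' C.hr j then 1 else 0) := by
        intro k; congr 1; simp [rot_eq_iff C.hr]
      simp_rw [this]
      simp [Finset.sum_ite_eq']
    rw [s1, s2] at hj
    omega
  have key2 : ∀ k : Fin r, F (rot C.hr k) = F k := by
    intro k; rw [key (rot C.hr k), rot'_rot]
  have const : ∀ i : ℕ, F ⟨i % r, Nat.mod_lt _ C.hr⟩ = F ⟨0, C.hr⟩ := by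
    intro i
    induction i with
    | zero => simp
    | succ i ih =>
      have : (⟨(i+1) % r, Nat.mod_lt _ C.hr⟩ : Fin r) = rot C.hr ⟨i % r, Nat.mod_lt _ C.hr⟩ := by
        apply Fin.ext
        simp [rot, Nat.mod_add_mod]
      rw [this, key2, ih]
  have constk : ∀ k : Fin r, F k = F ⟨0, C.hr⟩ := by
    intro k
    have : k = ⟨k.val % r, Nat.mod_lt _ C.hr⟩ := by
      apply Fin.ext; simp [Nat.mod_eq_of_lt k.isLt]
    rw [this, const]
  intro a
  by_cases ha : ∃ k, C.arc k = a
  · obtain ⟨k, rfl⟩ := ha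
    rw [C.vec_arc]
    have hk := constk k
    rw [hF] at hk
    simp only at hk
    rcases C.sign_cases k with hs | hs <;> rw [hs] at hk ⊢ <;> nlinarith [hk]
  · push_neg at ha
    rw [C.vec_not_mem a ha, mul_zero]
    by_contra hne
    obtain ⟨k, hk⟩ := hsupp a hne
    exact ha k hk


def other (t h : E → V) (a : E) (v : V) : V := if t a = v then h a else t a

lemma exists_gcycle (t h : E → V) (g : E → ℤ) (hg : g ≠ 0)
    (hc : ∀ v : V, ∑ a : E, inc t h v a * g a = 0) :
    ∃ r : ℕ, ∃ C : GCycle t h r, ∀ k, g (C.arc k) ≠ 0 := by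
  classical
  by_cases hloop : ∃ a, g a ≠ 0 ∧ t a = h a
  · obtain ⟨a, ha, hth⟩ := hloop
    refine ⟨1, ⟨one_pos, fun _ => a, fun _ => 1, fun _ => t a,
      fun x y _ => Subsingleton.elim x y, fun x y _ => Subsingleton.elim x y, ?_⟩,
      fun _ => ha⟩
    intro k
    exact Or.inl ⟨rfl, rfl, hth.symm⟩
  · push_neg at hloop
    have stepL : ∀ a v, g a ≠ 0 → (t a = v ∨ h a = v) →
        ∃ a', a' ≠ a ∧ g a' ≠ 0 ∧ (t a' = v ∨ h a' = v) := by
      intro a v hga hincid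
      by_contra hcon
      push_neg at hcon
      have hsum := hc v
      have hzero : ∀ a' ∈ Finset.univ, a' ≠ a → inc t h v a' * g a' = 0 := by
        intro a' _ hne
        by_cases hga' : g a' = 0
        · rw [hga', mul_zero]
        · obtain ⟨h1, h2⟩ := hcon a' hne hga'
          rw [inc, if_neg h1, if_neg h2]; ring
      rw [Finset.sum_eq_single a hzero (by simp)] at hsum
      have hincv : inc t h v a = 1 ∨ inc t h v a = -1 := by
        rcases hincid with h1 | h1
        · have h2 : h a ≠ v := fun hh => hloop a hga (h1.trans hh.symm)
          left; rw [inc, if_pos h1, if_neg h2]; ring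
        · have h2 : t a ≠ v := fun hh => hloop a hga (hh.trans h1.symm)
          right; rw [inc, if_neg h2, if_pos h1]; ring
      rcases hincv with h1 | h1 <;> rw [h1] at hsum <;> simp at hsum <;> exact hga hsum
    obtain ⟨a₀, ha₀⟩ : ∃ a, g a ≠ 0 := by
      by_contra hco; push_neg at hco; exact hg (funext fun a => hco a)
    have hstep2 : ∀ p : E × V, ∃ a' : E, (g p.1 ≠ 0 ∧ (t p.1 = p.2 ∨ h p.1 = p.2)) →
        (a' ≠ p.1 ∧ g a' ≠ 0 ∧ (t a' = other t h p.1 p.2 ∨ h a' = other t h p.1 p.2)) := by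
      intro p
      by_cases hp : g p.1 ≠ 0 ∧ (t p.1 = p.2 ∨ h p.1 = p.2)
      · have hincs : t p.1 = other t h p.1 p.2 ∨ h p.1 = other t h p.1 p.2 := by
          rw [other]; split
          · exact Or.inr rfl
          · exact Or.inl rfl
        obtain ⟨a', h1, h2, h3⟩ := stepL p.1 (other t h p.1 p.2) hp.1 hincs
        exact ⟨a', fun _ => ⟨h1, h2, h3⟩⟩
      · exact ⟨p.1, fun hh => absurd hh hp⟩
    choose nxt hnxt using hstep2
    set W : ℕ → E × V := fun k => Nat.rec (a₀, t a₀) (fun _ p => (nxt p, other t h p.1 p.2)) k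
      with hW
    have Wsucc : ∀ k, W (k+1) = (nxt (W k), other t h (W k).1 (W k).2) := fun k => rfl
    have inv : ∀ k, g (W k).1 ≠ 0 ∧ (t (W k).1 = (W k).2 ∨ h (W k).1 = (W k).2) := by
      intro k; induction k with
      | zero => exact ⟨ha₀, Or.inl rfl⟩
      | succ k ih =>
        obtain ⟨h1, h2, h3⟩ := hnxt (W k) ih
        rw [Wsucc]
        exact ⟨h2, h3⟩
    have consec : ∀ k, (W (k+1)).1 ≠ (W k).1 := by
      intro k
      rw [Wsucc]
      exact (hnxt (W k) (inv k)).1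
    have epair : ∀ k, (t (W k).1 = (W k).2 ∧ h (W k).1 = (W (k+1)).2) ∨
        (h (W k).1 = (W k).2 ∧ t (W k).1 = (W (k+1)).2) := by
      intro k
      have hv : (W (k+1)).2 = other t h (W k).1 (W k).2 := by rw [Wsucc]
      rcases (inv k).2 with h1 | h1
      · left
        refine ⟨h1, ?_⟩
        rw [hv, other, if_pos h1]
      · by_cases ht : t (W k).1 = (W k).2
        · left
          refine ⟨ht, ?_⟩
          rw [hv, other, if_pos ht]
        · right
          refine ⟨h1, ?_⟩
          rw [hv, other, if_neg ht]
    have hex : ∃ jj : ℕ, ∃ ii, ii < jj ∧ (W ii).2 = (W jj).2 := by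
      obtain ⟨i, j, hij, hq⟩ := Fintype.exists_ne_map_eq_of_card_lt
        (fun k : Fin (Fintype.card V + 1) => (W k.val).2) (by simp)
      rcases Nat.lt_or_ge i.val j.val with h1 | h1
      · exact ⟨j.val, i.val, h1, hq⟩
      · have h2 : j.val < i.val := lt_of_le_of_ne h1 (fun hh => hij (Fin.ext hh.symm))
        exact ⟨i.val, j.val, h2, hq.symm⟩
    let j₀ := Nat.find hex
    obtain ⟨i₀, hi₀lt, hqi⟩ : ∃ ii, ii < j₀ ∧ (W ii).2 = (W j₀).2 := Nat.find_spec hex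
    have qinj : ∀ k l, k < j₀ → l < j₀ → (W k).2 = (W l).2 → k = l := by
      intro k l hk hl hq
      by_contra hne
      rcases Nat.lt_or_ge k l with h1 | h1
      · exact Nat.find_min hex hl ⟨k, h1, hq⟩
      · exact Nat.find_min hex hk ⟨l, lt_of_le_of_ne h1 (Ne.symm hne), hq.symm⟩
    have hqwrap : (W j₀).2 = (W i₀).2 := hqi.symm
    set r := j₀ - i₀ with hrdef
    have hr : 0 < r := by omega
    have hvsucc : ∀ u : Fin r, (W (i₀ + u.val + 1)).2
        = (W (i₀ + ((u.val + 1) % r))).2 := by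
      intro u
      by_cases h1 : u.val + 1 < r
      · rw [Nat.mod_eq_of_lt h1, show i₀ + (u.val + 1) = i₀ + u.val + 1 from by omega]
      · have h2 : u.val + 1 = r := by omega
        have h3 : i₀ + u.val + 1 = j₀ := by omega
        rw [h3, h2, Nat.mod_self, hqwrap, Nat.add_zero]
    refine ⟨r, ⟨hr, fun u => (W (i₀ + u.val)).1,
      fun u => if t (W (i₀ + u.val)).1 = (W (i₀ + u.val)).2 then 1 else -1,
      fun u => (W (i₀ + u.val)).2, ?_, ?_, ?_⟩, fun k => (inv _).1⟩
    · -- arc_inj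
      have main : ∀ u v : Fin r, u.val < v.val → (W (i₀ + u.val)).1 ≠ (W (i₀ + v.val)).1 := by
        intro u v huv heq
        have eu := epair (i₀ + u.val)
        have ev := epair (i₀ + v.val)
        rw [heq] at eu
        have hku : i₀ + u.val < j₀ := by omega
        have hkv : i₀ + v.val < j₀ := by omega
        have hdisj : ((W (i₀+u.val)).2 = (W (i₀+v.val)).2 ∧ (W (i₀+u.val+1)).2 = (W (i₀+v.val+1)).2) ∨
            ((W (i₀+u.val)).2 = (W (i₀+v.val+1)).2 ∧ (W (i₀+u.val+1)).2 = (W (i₀+v.val)).2) := by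
          rcases eu with ⟨a1, a2⟩ | ⟨a1, a2⟩ <;> rcases ev with ⟨b1, b2⟩ | ⟨b1, b2⟩
          · exact Or.inl ⟨a1.symm.trans b1, a2.symm.trans b2⟩
          · exact Or.inr ⟨a1.symm.trans b2, a2.symm.trans b1⟩
          · exact Or.inr ⟨a1.symm.trans b2, a2.symm.trans b1⟩
          · exact Or.inl ⟨a1.symm.trans b1, a2.symm.trans b2⟩
        rcases hdisj with ⟨c1, c2⟩ | ⟨c1, c2⟩
        · have := qinj _ _ hku hkv c1; omega
        · by_cases hkv1 : i₀ + v.val + 1 < j₀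
          · have := qinj _ _ hku hkv1 c1; omega
          · have hkvj : i₀ + v.val + 1 = j₀ := by omega
            have hc1 : (W (i₀+u.val)).2 = (W i₀).2 := by rw [c1, hkvj, hqwrap]
            have hkui : i₀ + u.val = i₀ := qinj _ _ hku (by omega) hc1
            have hu0 : u.val = 0 := by omega
            have h2lt : i₀ + u.val + 1 < j₀ := by omega
            have hcons : i₀ + u.val + 1 = i₀ + v.val := qinj _ _ h2lt hkv c2
            apply consec (i₀ + u.val)
            rw [hcons, heq]
      intro u v heq
      by_contra hne
      rcases Nat.lt_or_ge u.val v.val with h1 | h1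
      · exact main u v h1 heq
      · exact main v u (lt_of_le_of_ne h1 (fun hh => hne (Fin.ext hh.symm))) heq.symm
    · -- vert_inj
      intro u v huv
      have := qinj (i₀ + u.val) (i₀ + v.val) (by omega) (by omega) huv
      exact Fin.ext (by omega)
    · -- step
      intro u
      rcases epair (i₀ + u.val) with ⟨h1, h2⟩ | ⟨h1, h2⟩
      · left
        refine ⟨if_pos h1, h1, ?_⟩
        show _ = (W (i₀ + ((u.val + 1) % r))).2
        rw [← hvsucc u]
        exact h2
      · have hne : t (W (i₀ + u.val)).1 ≠ (W (i₀ + u.val)).2 :=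
          fun hh => hloop _ (inv _).1 (hh.trans h1.symm)
        right
        refine ⟨if_neg hne, ?_, h1⟩
        show _ = (W (i₀ + ((u.val + 1) % r))).2
        rw [← hvsucc u]
        exact h2


def shift (hr : 0 < r) (k₀ k : Fin r) : Fin r := ⟨(k.val + k₀.val) % r, Nat.mod_lt _ hr⟩

lemma shift_bij (hr : 0 < r) (k₀ : Fin r) : Function.Bijective (shift hr k₀) := by
  apply Finite.injective_iff_bijective.mp
  intro a b hab
  have key : ∀ c : Fin r, ((c.val + k₀.val) % r + (r - k₀.val)) % r = c.val := by
    intro c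
    rw [Nat.mod_add_mod, show c.val + k₀.val + (r - k₀.val) = c.val + r from by omega,
      Nat.add_mod_right, Nat.mod_eq_of_lt c.isLt]
  have hv : (a.val + k₀.val) % r = (b.val + k₀.val) % r := congrArg Fin.val hab
  apply Fin.ext
  rw [← key a, ← key b, hv]

def GCycle.rotate (C : GCycle t h r) (k₀ : Fin r) : GCycle t h r where
  hr := C.hr
  arc k := C.arc (shift C.hr k₀ k)
  sign k := C.sign (shift C.hr k₀ k)
  vert k := C.vert (shift C.hr k₀ k)
  arc_inj := C.arc_inj.comp (shift_bij C.hr k₀).injective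
  vert_inj := C.vert_inj.comp (shift_bij C.hr k₀).injective
  step k := by
    have key : (⟨((shift C.hr k₀ k).val + 1) % r, Nat.mod_lt _ C.hr⟩ : Fin r)
        = shift C.hr k₀ ⟨(k.val + 1) % r, Nat.mod_lt _ C.hr⟩ := by
      apply Fin.ext
      simp only [shift]
      rw [Nat.mod_add_mod, Nat.mod_add_mod]
      congr 1
      omega
    rcases C.step (shift C.hr k₀ k) with ⟨h1, h2, h3⟩ | ⟨h1, h2, h3⟩
    · exact Or.inl ⟨h1, h2, by rw [h3, key]⟩
    · exact Or.inr ⟨h1, by rw [h2, key], h3⟩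

lemma GCycle.rotate_vec (C : GCycle t h r) (k₀ : Fin r) : (C.rotate k₀).vec = C.vec := by
  funext a
  exact Fintype.sum_bijective (shift C.hr k₀) (shift_bij C.hr k₀) _ _ (fun k => rfl)

lemma GCycle.rotate_vert_zero (C : GCycle t h r) (k₀ : Fin r) :
    (C.rotate k₀).vert ⟨0, C.hr⟩ = C.vert k₀ := by
  show C.vert (shift C.hr k₀ ⟨0, C.hr⟩) = C.vert k₀
  congr 1
  apply Fin.ext
  simp [shift, Nat.mod_eq_of_lt k₀.isLt]


section Inst

variable {n m : ℕ}

def tV (tail : Fin m → Fin n) : (Fin m ⊕ Fin n ⊕ Fin n) → (Fin n ⊕ Unit) :=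
  Sum.elim (fun e => Sum.inl (tail e)) (Sum.elim (fun _ => Sum.inr ()) (fun i => Sum.inl i))

def hV (head : Fin m → Fin n) : (Fin m ⊕ Fin n ⊕ Fin n) → (Fin n ⊕ Unit) :=
  Sum.elim (fun e => Sum.inl (head e)) (Sum.elim (fun i => Sum.inl i) (fun _ => Sum.inr ()))

@[simp] lemma tV_inl (tail : Fin m → Fin n) (e : Fin m) :
    tV tail (Sum.inl e) = Sum.inl (tail e) := rfl
@[simp] lemma tV_inrl (tail : Fin m → Fin n) (i : Fin n) :
    tV tail (Sum.inr (Sum.inl i)) = Sum.inr () := rfl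
@[simp] lemma tV_inrr (tail : Fin m → Fin n) (i : Fin n) :
    tV tail (Sum.inr (Sum.inr i)) = Sum.inl i := rfl
@[simp] lemma hV_inl (head : Fin m → Fin n) (e : Fin m) :
    hV head (Sum.inl e) = Sum.inl (head e) := rfl
@[simp] lemma hV_inrl (head : Fin m → Fin n) (i : Fin n) :
    hV head (Sum.inr (Sum.inl i)) = Sum.inl i := rfl
@[simp] lemma hV_inrr (head : Fin m → Fin n) (i : Fin n) :
    hV head (Sum.inr (Sum.inr i)) = Sum.inr () := rfl

variable (tail head : Fin m → Fin n)

lemma row_eq (i : Fin n) (a : Fin m ⊕ Fin n ⊕ Fin n) :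
    Fmat (incidence tail head) i a = ((inc (tV tail) (hV head) (Sum.inl i) a : ℤ) : ℝ) := by
  rcases a with e | j | j
  · simp only [Fmat, incidence, inc, tV_inl, hV_inl, Sum.elim_inl, Sum.inl.injEq]
    push_cast
    rfl
  · simp only [Fmat, inc, tV_inrl, hV_inrl, Sum.elim_inr, Sum.elim_inl]
    rcases eq_or_ne i j with rfl | hne
    · simp
    · simp [hne, Ne.symm hne]
  · simp only [Fmat, inc, tV_inrr, hV_inrr, Sum.elim_inr, Sum.elim_inl]
    rcases eq_or_ne i j with rfl | hne
    · simp
    · simp [hne, Ne.symm hne]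

lemma mulVec_row (x : Fin m ⊕ Fin n ⊕ Fin n → ℤ) (i : Fin n) :
    (Fmat (incidence tail head)).mulVec (fun a => (x a : ℝ)) i
      = ((∑ a, inc (tV tail) (hV head) (Sum.inl i) a * x a : ℤ) : ℝ) := by
  show ∑ a, Fmat (incidence tail head) i a * (x a : ℝ) = _
  push_cast
  apply Finset.sum_congr rfl
  intro a _
  rw [row_eq]

lemma dummy_row (x : Fin m ⊕ Fin n ⊕ Fin n → ℤ)
    (hrows : ∀ i : Fin n, ∑ a, inc (tV tail) (hV head) (Sum.inl i) a * x a = 0) :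
    ∑ a, inc (tV tail) (hV head) (Sum.inr ()) a * x a = 0 := by
  have htot : ∀ a, ∑ v : Fin n ⊕ Unit, inc (tV tail) (hV head) v a = 0 := by
    intro a
    unfold inc
    rw [Finset.sum_sub_distrib]
    rw [Finset.sum_ite_eq Finset.univ (tV tail a) (fun _ => (1:ℤ))]
    rw [Finset.sum_ite_eq Finset.univ (hV head a) (fun _ => (1:ℤ))]
    simp
  have hswap : ∑ v : Fin n ⊕ Unit, ∑ a, inc (tV tail) (hV head) v a * x a = 0 := by
    rw [Finset.sum_comm]
    apply Finset.sum_eq_zero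
    intro a _
    rw [← Finset.sum_mul, htot a, zero_mul]
  rw [Fintype.sum_sum_type] at hswap
  rw [Finset.sum_congr rfl (fun i _ => hrows i)] at hswap
  simpa using hswap

lemma cons_of_ker (x : Fin m ⊕ Fin n ⊕ Fin n → ℤ)
    (hk : (Fmat (incidence tail head)).mulVec (fun a => (x a : ℝ)) = 0) :
    ∀ v : Fin n ⊕ Unit, ∑ a, inc (tV tail) (hV head) v a * x a = 0 := by
  have hrows : ∀ i : Fin n, ∑ a, inc (tV tail) (hV head) (Sum.inl i) a * x a = 0 := by
    intro i
    have := congrFun hk i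
    rw [mulVec_row] at this
    simp only [Pi.zero_apply] at this
    exact_mod_cast this
  rintro (i | ⟨⟩)
  · exact hrows i
  · exact dummy_row tail head x hrows

lemma ker_of_cons (x : Fin m ⊕ Fin n ⊕ Fin n → ℤ)
    (hcons : ∀ v : Fin n ⊕ Unit, ∑ a, inc (tV tail) (hV head) v a * x a = 0) :
    (Fmat (incidence tail head)).mulVec (fun a => (x a : ℝ)) = 0 := by
  funext i
  rw [mulVec_row, hcons (Sum.inl i)]
  simp


lemma ite_ll (a b : Fin n) (c : ℤ) :
    (if (Sum.inr (Sum.inl a) : Fin m ⊕ Fin n ⊕ Fin n) = Sum.inr (Sum.inl b) then c else 0)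
      = if b = a then c else 0 := by
  rcases eq_or_ne b a with rfl | h
  · simp
  · rw [if_neg (by simp [Ne.symm h]), if_neg h]

lemma ite_rr (a b : Fin n) (c : ℤ) :
    (if (Sum.inr (Sum.inr a) : Fin m ⊕ Fin n ⊕ Fin n) = Sum.inr (Sum.inr b) then c else 0)
      = if b = a then c else 0 := by
  rcases eq_or_ne b a with rfl | h
  · simp
  · rw [if_neg (by simp [Ne.symm h]), if_neg h]

lemma ite_rl (a b : Fin n) (c : ℤ) :
    (if (Sum.inr (Sum.inr a) : Fin m ⊕ Fin n ⊕ Fin n) = Sum.inr (Sum.inl b) then c else 0)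
      = 0 := by rw [if_neg (by simp)]

lemma ite_lr (a b : Fin n) (c : ℤ) :
    (if (Sum.inr (Sum.inl a) : Fin m ⊕ Fin n ⊕ Fin n) = Sum.inr (Sum.inr b) then c else 0)
      = 0 := by rw [if_neg (by simp)]

end Inst

end CircuitAux
set_option maxHeartbeats 1000000 in
open CircuitAux in
/-- circuit classification for the pseudoflow polyhedron.  Every
circuit `g = (g_x, g⁺, g⁻)` is, up to a global sign `ε = ±1`, a cycle circuit
`(C, 0, 0)`, a path circuit `(H_{ij}, ·, ·)` with one of the four slack
patterns `(e_i, e_j)`, `(e_i - e_j, 0)`, `(0, -e_i + e_j)`, `(-e_j, -e_i)`,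
or a trivial circuit `(0, e_i, e_i)`. -/
theorem circuit_classification {n m : ℕ} (tail head : Fin m → Fin n)
    (g : Fin m ⊕ Fin n ⊕ Fin n → ℤ)
    (hg : IsCircuitOf (incidence tail head) g) :
    ∃ ε : ℤ, (ε = 1 ∨ ε = -1) ∧
      ((∃ r : ℕ, ∃ C : SimpleCycle n m tail head r,
          (∀ e, g (Sum.inl e) = ε * C.vec e) ∧
          (∀ i, g (Sum.inr (Sum.inl i)) = 0) ∧
          (∀ i, g (Sum.inr (Sum.inr i)) = 0)) ∨
       (∃ r : ℕ, 0 < r ∧ ∃ H : SimplePath n m tail head r,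
          (∀ e, g (Sum.inl e) = ε * H.vec e) ∧
          ((∀ i, g (Sum.inr (Sum.inl i)) = ε * (Pi.single (H.vert 0) 1 : Fin n → ℤ) i) ∧
             (∀ i, g (Sum.inr (Sum.inr i)) = ε * (Pi.single (H.vert (Fin.last r)) 1 : Fin n → ℤ) i) ∨
           (∀ i, g (Sum.inr (Sum.inl i)) =
              ε * ((Pi.single (H.vert 0) 1 : Fin n → ℤ) i - (Pi.single (H.vert (Fin.last r)) 1 : Fin n → ℤ) i)) ∧
             (∀ i, g (Sum.inr (Sum.inr i)) = 0) ∨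
           (∀ i, g (Sum.inr (Sum.inl i)) = 0) ∧
             (∀ i, g (Sum.inr (Sum.inr i)) =
               ε * (-(Pi.single (H.vert 0) 1 : Fin n → ℤ) i + (Pi.single (H.vert (Fin.last r)) 1 : Fin n → ℤ) i)) ∨
           (∀ i, g (Sum.inr (Sum.inl i)) = -(ε * (Pi.single (H.vert (Fin.last r)) 1 : Fin n → ℤ) i)) ∧
             (∀ i, g (Sum.inr (Sum.inr i)) = -(ε * (Pi.single (H.vert 0) 1 : Fin n → ℤ) i)))) ∨
       (∃ i₀ : Fin n,
          (∀ e, g (Sum.inl e) = 0) ∧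
          (∀ i, g (Sum.inr (Sum.inl i)) = ε * (Pi.single i₀ 1 : Fin n → ℤ) i) ∧
          (∀ i, g (Sum.inr (Sum.inr i)) = ε * (Pi.single i₀ 1 : Fin n → ℤ) i))) := by
  classical
  obtain ⟨hg0, hker, hgcd, hmin⟩ := hg
  have hcons : ∀ v : Fin n ⊕ Unit, ∑ a, inc (tV tail) (hV head) v a * g a = 0 :=
    cons_of_ker tail head g hker
  obtain ⟨r, C, hCsupp⟩ := exists_gcycle (tV tail) (hV head) g hg0 hcons
  have hreal : (Fmat (incidence tail head)).mulVec (fun a => ((C.vec a : ℤ) : ℝ)) = 0 :=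
    ker_of_cons tail head C.vec (fun v => C.cons_vec v)
  have hvne : (fun a => ((C.vec a : ℤ) : ℝ)) ≠ 0 := by
    intro hzz
    have h0 := congrFun hzz (C.arc ⟨0, C.hr⟩)
    simp only [C.vec_arc] at h0
    rcases C.sign_cases ⟨0, C.hr⟩ with hs | hs <;> rw [hs] at h0 <;> norm_num at h0
  have hsub : {v | ((C.vec v : ℤ) : ℝ) ≠ 0} ⊆ {v | g v ≠ 0} := by
    intro a ha
    simp only [Set.mem_setOf_eq] at ha ⊢
    have hvz : C.vec a ≠ 0 := by exact_mod_cast ha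
    by_contra hga
    apply hvz
    apply C.vec_not_mem
    intro k hk
    rw [← hk] at hga
    exact hCsupp k hga
  have hsupp2 := hmin _ hvne hreal hsub
  have hsupp : ∀ a, g a ≠ 0 → ∃ k, C.arc k = a := by
    intro a ha
    have hmem : ((C.vec a : ℤ) : ℝ) ≠ 0 := hsupp2 ha
    by_contra hno
    push_neg at hno
    rw [C.vec_not_mem a hno] at hmem
    simp at hmem
  have hmul := C.eq_smul_vec g hcons hsupp
  set ε := C.sign ⟨0, C.hr⟩ * g (C.arc ⟨0, C.hr⟩) with hεdef
  have hεunit : ε = 1 ∨ ε = -1 := by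
    have hdvd : ε.natAbs ∣ 1 := by
      rw [← hgcd]
      apply Finset.dvd_gcd
      intro a _
      exact Int.natAbs_dvd_natAbs.mpr (Dvd.intro (C.vec a) (hmul a).symm)
    have h1 : ε.natAbs = 1 := Nat.dvd_one.mp hdvd
    rcases Int.natAbs_eq_iff.mp h1 with h2 | h2
    · exact Or.inl (by exact_mod_cast h2)
    · exact Or.inr (by exact_mod_cast h2)
  by_cases hdum : ∃ k, C.vert k = Sum.inr ()
  · -- cycle passes through the dummy node
    obtain ⟨k₀, hk₀⟩ := hdum
    set D := C.rotate k₀ with hDdef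
    have hmulD : ∀ a, g a = ε * D.vec a := by
      intro a
      rw [hDdef, C.rotate_vec]
      exact hmul a
    have hD0 : D.vert ⟨0, D.hr⟩ = Sum.inr () := by
      rw [hDdef]
      exact (C.rotate_vert_zero k₀).trans hk₀
    have hvne0 : ∀ k : Fin r, k.val ≠ 0 → D.vert k ≠ Sum.inr () := by
      intro k hk hcon
      exact hk (congrArg Fin.val (D.vert_inj (hcon.trans hD0.symm)))
    have hr2 : 2 ≤ r := by
      by_contra hlt
      have hr1 : r = 1 := by
        have := C.hr
        omega
      have hstep0 := D.step ⟨0, D.hr⟩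
      have hidx : (⟨(0 + 1) % r, Nat.mod_lt _ D.hr⟩ : Fin r) = ⟨0, D.hr⟩ :=
        Fin.ext (by simp [hr1])
      rw [hidx] at hstep0
      rcases harc : D.arc ⟨0, D.hr⟩ with e | j | j <;> rw [harc] at hstep0 <;>
        rcases hstep0 with ⟨_, h2, h3⟩ | ⟨_, h2, h3⟩ <;>
        rw [hD0] at h2 h3 <;> simp at h2 h3
    have hD0' : ∀ (k : Fin r), k.val = 0 → D.vert k = Sum.inr () := by
      intro k hk
      rw [show k = ⟨0, D.hr⟩ from Fin.ext hk]
      exact hD0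
    have hDstep : ∀ (k l : Fin r), (k.val + 1) % r = l.val →
        ((D.sign k = 1 ∧ tV tail (D.arc k) = D.vert k ∧ hV head (D.arc k) = D.vert l) ∨
         (D.sign k = -1 ∧ tV tail (D.arc k) = D.vert l ∧ hV head (D.arc k) = D.vert k)) := by
      intro k l hkl
      have hstep := D.step k
      have he : (⟨(k.val + 1) % r, Nat.mod_lt _ D.hr⟩ : Fin r) = l := Fin.ext hkl
      rw [he] at hstep
      exact hstep
    have hout : ∀ (k l : Fin r), (k.val + 1) % r = l.val → D.vert k = Sum.inr () →
        (∃ i₁, D.arc k = Sum.inr (Sum.inl i₁) ∧ D.sign k = 1 ∧ D.vert l = Sum.inl i₁) ∨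
        (∃ i₁, D.arc k = Sum.inr (Sum.inr i₁) ∧ D.sign k = -1 ∧ D.vert l = Sum.inl i₁) := by
      intro k l hkl hvk
      rcases hDstep k l hkl with ⟨h1, h2, h3⟩ | ⟨h1, h2, h3⟩
      · rw [hvk] at h2
        rcases harc : D.arc k with e | j | j <;> rw [harc] at h2 h3
        · simp at h2
        · exact Or.inl ⟨j, rfl, h1, by rw [hV_inrl] at h3; exact h3.symm⟩
        · simp at h2
      · rw [hvk] at h3
        rcases harc : D.arc k with e | j | j <;> rw [harc] at h2 h3
        · simp at h3
        · simp at h3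
        · exact Or.inr ⟨j, rfl, h1, by rw [tV_inrr] at h2; exact h2.symm⟩
    have hin : ∀ (k l : Fin r), (k.val + 1) % r = l.val → D.vert l = Sum.inr () →
        (∃ j₁, D.arc k = Sum.inr (Sum.inr j₁) ∧ D.sign k = 1 ∧ D.vert k = Sum.inl j₁) ∨
        (∃ j₁, D.arc k = Sum.inr (Sum.inl j₁) ∧ D.sign k = -1 ∧ D.vert k = Sum.inl j₁) := by
      intro k l hkl hvl
      rcases hDstep k l hkl with ⟨h1, h2, h3⟩ | ⟨h1, h2, h3⟩
      · rw [hvl] at h3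
        rcases harc : D.arc k with e | j | j <;> rw [harc] at h2 h3
        · simp at h3
        · simp at h3
        · exact Or.inl ⟨j, rfl, h1, by rw [tV_inrr] at h2; exact h2.symm⟩
      · rw [hvl] at h2
        rcases harc : D.arc k with e | j | j <;> rw [harc] at h2 h3
        · simp at h2
        · exact Or.inr ⟨j, rfl, h1, by rw [hV_inrl] at h3; exact h3.symm⟩
        · simp at h2
    have hmidarc : ∀ (k l : Fin r), (k.val + 1) % r = l.val → D.vert k ≠ Sum.inr () →
        D.vert l ≠ Sum.inr () → ∃ e, D.arc k = Sum.inl e := by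
      intro k l hkl hk hl
      rcases harc : D.arc k with e | j | j
      · exact ⟨e, rfl⟩
      · exfalso
        rcases hDstep k l hkl with ⟨_, h2, _⟩ | ⟨_, h2, _⟩ <;> rw [harc, tV_inrl] at h2
        · exact hk h2.symm
        · exact hl h2.symm
      · exfalso
        rcases hDstep k l hkl with ⟨_, _, h3⟩ | ⟨_, _, h3⟩ <;> rw [harc, hV_inrr] at h3
        · exact hl h3.symm
        · exact hk h3.symm
    by_cases hre : r = 2
    · -- trivial circuit
      subst hre
      have hc0 := hout ⟨0, by omega⟩ ⟨1, by omega⟩ (by norm_num) (hD0' _ rfl)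
      have hcL := hin ⟨1, by omega⟩ ⟨0, by omega⟩ (by norm_num) (hD0' _ rfl)
      have hne01 : D.arc ⟨0, by omega⟩ ≠ D.arc ⟨1, by omega⟩ := by
        intro hh
        have := congrArg Fin.val (D.arc_inj hh)
        simp at this
      have hall : ∀ k : Fin 2, k = ⟨0, by omega⟩ ∨ k = ⟨1, by omega⟩ := by
        intro k
        rcases k with ⟨kv, hkv⟩
        by_cases hk0 : kv = 0
        · exact Or.inl (Fin.ext hk0)
        · exact Or.inr (Fin.ext (show kv = 1 by omega))
      have hzero_inl : ∀ x, (∀ y, D.arc ⟨0, by omega⟩ ≠ Sum.inl y) →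
          (∀ y, D.arc ⟨1, by omega⟩ ≠ Sum.inl y) → ∀ e : Fin m, g (Sum.inl e) = x * D.vec (Sum.inl e) → True := fun _ _ _ _ _ => trivial
      rcases hc0 with ⟨i₁, ha0, hs0, hv1⟩ | ⟨i₁, ha0, hs0, hv1⟩ <;>
        rcases hcL with ⟨j₁, haL, hsL, hvL⟩ | ⟨j₁, haL, hsL, hvL⟩
      · -- (a⁺ out, a⁻ in): trivial circuit with ε
        have hij : j₁ = i₁ := Sum.inl_injective (hvL.symm.trans hv1)
        subst hij
        refine ⟨ε, hεunit, Or.inr (Or.inr ⟨j₁, ?_, ?_, ?_⟩)⟩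
        · intro e
          rw [hmulD, D.vec_not_mem, mul_zero]
          intro k
          rcases hall k with rfl | rfl
          · rw [ha0]; simp
          · rw [haL]; simp
        · intro i
          rw [hmulD, Pi.single_apply]
          congr 1
          by_cases hii : i = j₁
          · subst hii
            rw [← ha0, D.vec_arc, hs0, if_pos rfl]
          · rw [if_neg hii, D.vec_not_mem]
            intro k
            rcases hall k with rfl | rfl
            · rw [ha0]
              simp only [ne_eq, Sum.inr.injEq, Sum.inl.injEq]
              exact fun hcc => hii hcc.symm
            · rw [haL]; simp
        · intro i
          rw [hmulD, Pi.single_apply]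
          congr 1
          by_cases hii : i = j₁
          · subst hii
            rw [← haL, D.vec_arc, hsL, if_pos rfl]
          · rw [if_neg hii, D.vec_not_mem]
            intro k
            rcases hall k with rfl | rfl
            · rw [ha0]; simp
            · rw [haL]
              simp only [ne_eq, Sum.inr.injEq, Sum.inr.injEq]
              exact fun hcc => hii hcc.symm
      · -- impossible: both arcs a⁺
        have hij : j₁ = i₁ := Sum.inl_injective (hvL.symm.trans hv1)
        exact absurd (by rw [ha0, haL, hij] : D.arc ⟨0, by omega⟩ = D.arc ⟨1, by omega⟩) hne01
      · -- impossible: both arcs a⁻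
        have hij : j₁ = i₁ := Sum.inl_injective (hvL.symm.trans hv1)
        exact absurd (by rw [ha0, haL, hij] : D.arc ⟨0, by omega⟩ = D.arc ⟨1, by omega⟩) hne01
      · -- (a⁻ out, a⁺ in): trivial circuit with -ε
        have hij : j₁ = i₁ := Sum.inl_injective (hvL.symm.trans hv1)
        subst hij
        have hεu' : -ε = 1 ∨ -ε = -1 := by
          rcases hεunit with hh | hh
          · exact Or.inr (by rw [hh])
          · exact Or.inl (by rw [hh]; ring)
        refine ⟨-ε, hεu', Or.inr (Or.inr ⟨j₁, ?_, ?_, ?_⟩)⟩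
        · intro e
          rw [hmulD, D.vec_not_mem, mul_zero]
          intro k
          rcases hall k with rfl | rfl
          · rw [ha0]; simp
          · rw [haL]; simp
        · intro i
          rw [hmulD, Pi.single_apply]
          have hv : D.vec (Sum.inr (Sum.inl i)) = if i = j₁ then -1 else 0 := by
            by_cases hii : i = j₁
            · subst hii
              rw [← haL, D.vec_arc, hsL, if_pos rfl]
            · rw [if_neg hii, D.vec_not_mem]
              intro k
              rcases hall k with rfl | rfl
              · rw [ha0]; simp
              · rw [haL]
                simp only [ne_eq, Sum.inr.injEq, Sum.inl.injEq]
                exact fun hcc => hii hcc.symm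
          rw [hv]
          split <;> ring
        · intro i
          rw [hmulD, Pi.single_apply]
          have hv : D.vec (Sum.inr (Sum.inr i)) = if i = j₁ then -1 else 0 := by
            by_cases hii : i = j₁
            · subst hii
              rw [← ha0, D.vec_arc, hs0, if_pos rfl]
            · rw [if_neg hii, D.vec_not_mem]
              intro k
              rcases hall k with rfl | rfl
              · rw [ha0]
                simp only [ne_eq, Sum.inr.injEq, Sum.inr.injEq]
                exact fun hcc => hii hcc.symm
              · rw [haL]; simp
          rw [hv]
          split <;> ring
    · -- path circuit, r ≥ 3
      obtain ⟨s, rfl⟩ : ∃ s, r = s + 2 := ⟨r - 2, by omega⟩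
      have hs1 : 0 < s := by omega
      have hmid : ∀ k : Fin s, ∃ e, D.arc ⟨k.val + 1, by omega⟩ = Sum.inl e := by
        intro k
        apply hmidarc ⟨k.val + 1, by omega⟩ ⟨k.val + 2, by omega⟩
        · show (k.val + 1 + 1) % (s + 2) = k.val + 2
          rw [Nat.mod_eq_of_lt (by omega)]
        · exact hvne0 _ (show k.val + 1 ≠ 0 by omega)
        · exact hvne0 _ (show k.val + 2 ≠ 0 by omega)
      choose parc hparc using hmid
      have hpv : ∀ k : Fin (s + 1), ∃ i, D.vert ⟨k.val + 1, by omega⟩ = Sum.inl i := by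
        intro k
        rcases hv : D.vert ⟨k.val + 1, by omega⟩ with i | u
        · exact ⟨i, rfl⟩
        · cases u
          exact absurd hv (hvne0 _ (show k.val + 1 ≠ 0 by omega))
      choose pvert hpvert using hpv
      have hc0 := hout ⟨0, by omega⟩ ⟨1, by omega⟩
        (by show (0 + 1) % (s + 2) = 1; rw [Nat.mod_eq_of_lt (by omega)]) (hD0' _ rfl)
      have hcL := hin ⟨s + 1, by omega⟩ ⟨0, by omega⟩
        (by show (s + 1 + 1) % (s + 2) = 0; rw [Nat.mod_self]) (hD0' _ rfl)
      have ha0r : ∀ e : Fin m, D.arc ⟨0, by omega⟩ ≠ Sum.inl e := by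
        rcases hc0 with ⟨i₁, ha, _⟩ | ⟨i₁, ha, _⟩ <;> rw [ha] <;> simp
      have haLr : ∀ e : Fin m, D.arc ⟨s + 1, by omega⟩ ≠ Sum.inl e := by
        rcases hcL with ⟨j₁, ha, _⟩ | ⟨j₁, ha, _⟩ <;> rw [ha] <;> simp
      have hp_ainj : Function.Injective parc := by
        intro a b hab
        have h1 : D.arc ⟨a.val + 1, by omega⟩ = D.arc ⟨b.val + 1, by omega⟩ := by
          rw [hparc a, hparc b, hab]
        have h2 := congrArg Fin.val (D.arc_inj h1)
        exact Fin.ext (by simpa using h2)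
      have hp_vinj : Function.Injective pvert := by
        intro a b hab
        have h1 : D.vert ⟨a.val + 1, by omega⟩ = D.vert ⟨b.val + 1, by omega⟩ := by
          rw [hpvert a, hpvert b, hab]
        have h2 := congrArg Fin.val (D.vert_inj h1)
        exact Fin.ext (by simpa using h2)
      have hp_step : ∀ k : Fin s,
          ((fun k : Fin s => D.sign ⟨k.val + 1, by omega⟩) k = 1 ∧
            tail (parc k) = pvert k.castSucc ∧ head (parc k) = pvert k.succ) ∨
          ((fun k : Fin s => D.sign ⟨k.val + 1, by omega⟩) k = -1 ∧
            tail (parc k) = pvert k.succ ∧ head (parc k) = pvert k.castSucc) := by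
        intro k
        have hstep := hDstep ⟨k.val + 1, by omega⟩ ⟨k.val + 2, by omega⟩
          (by show (k.val + 1 + 1) % (s + 2) = k.val + 2; rw [Nat.mod_eq_of_lt (by omega)])
        have hcs : D.vert ⟨k.val + 1, by omega⟩ = Sum.inl (pvert k.castSucc) := hpvert k.castSucc
        have hsu : D.vert ⟨k.val + 2, by omega⟩ = Sum.inl (pvert k.succ) := hpvert k.succ
        rw [hparc k, hcs, hsu] at hstep
        rcases hstep with ⟨h1, h2, h3⟩ | ⟨h1, h2, h3⟩
        · exact Or.inl ⟨h1, Sum.inl_injective (by rw [tV_inl] at h2; exact h2),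
            Sum.inl_injective (by rw [hV_inl] at h3; exact h3)⟩
        · exact Or.inr ⟨h1, Sum.inl_injective (by rw [tV_inl] at h2; exact h2),
            Sum.inl_injective (by rw [hV_inl] at h3; exact h3)⟩
      have hsplit : ∀ f : Fin (s + 2) → ℤ,
          (∑ k, f k) = f ⟨0, by omega⟩ + (∑ k : Fin s, f ⟨k.val + 1, by omega⟩)
            + f ⟨s + 1, by omega⟩ := by
        intro f
        rw [Fin.sum_univ_succ, Fin.sum_univ_castSucc]
        have h0 : f 0 = f ⟨0, by omega⟩ := congrArg f (Fin.ext (by simp))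
        have hm : ∀ i : Fin s, f ((i.castSucc).succ) = f ⟨i.val + 1, by omega⟩ :=
          fun i => congrArg f (Fin.ext (by simp))
        have hl : f ((Fin.last s).succ) = f ⟨s + 1, by omega⟩ := congrArg f (Fin.ext (by simp))
        rw [h0, hl]
        simp_rw [hm]
        ring
      have hvec_inl : ∀ e, D.vec (Sum.inl e)
          = ∑ k : Fin s, (if parc k = e then D.sign ⟨k.val + 1, by omega⟩ else 0) := by
        intro e
        show (∑ k : Fin (s + 2), if D.arc k = Sum.inl e then D.sign k else 0) = _
        rw [hsplit]
        rw [if_neg (ha0r e), if_neg (haLr e), zero_add, add_zero]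
        apply Finset.sum_congr rfl
        intro k _
        rw [hparc k]
        simp only [Sum.inl.injEq]
      have hvec_inr : ∀ x : Fin n ⊕ Fin n, D.vec (Sum.inr x)
          = (if D.arc ⟨0, by omega⟩ = Sum.inr x then D.sign ⟨0, by omega⟩ else 0)
            + (if D.arc ⟨s + 1, by omega⟩ = Sum.inr x then D.sign ⟨s + 1, by omega⟩ else 0) := by
        intro x
        show (∑ k : Fin (s + 2), if D.arc k = Sum.inr x then D.sign k else 0) = _
        rw [hsplit]
        rw [Finset.sum_eq_zero (fun k _ => by rw [hparc k]; simp), add_zero]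
      have h00 : (0 : Fin (s + 1)) = ⟨0, by omega⟩ := Fin.ext (by simp)
      have hginl : ∀ e, g (Sum.inl e)
          = ε * ∑ k : Fin s, (if parc k = e then D.sign ⟨k.val + 1, by omega⟩ else 0) := by
        intro e
        rw [hmulD, hvec_inl e]
      rcases hc0 with ⟨i₁, ha0, hs0, hv1⟩ | ⟨i₁, ha0, hs0, hv1⟩ <;>
        rcases hcL with ⟨j₁, haL, hsL, hvL⟩ | ⟨j₁, haL, hsL, hvL⟩ <;>
        [skip; skip; skip; skip] <;>
        have hi₁ : pvert 0 = i₁ := by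
          rw [h00]
          exact Sum.inl_injective ((hpvert ⟨0, by omega⟩).symm.trans hv1)
      all_goals have hj₁ : pvert (Fin.last s) = j₁ :=
        Sum.inl_injective ((hpvert (Fin.last s)).symm.trans hvL)
      · -- pattern 1: (e_i, e_j)
        refine ⟨ε, hεunit, Or.inr (Or.inl ⟨s, hs1,
          ⟨parc, fun k => D.sign ⟨k.val + 1, by omega⟩, pvert, hp_ainj, hp_vinj, hp_step⟩,
          hginl, Or.inl ⟨?_, ?_⟩⟩)⟩
        · intro i
          show g (Sum.inr (Sum.inl i)) = ε * (Pi.single (pvert 0) 1 : Fin n → ℤ) i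
          rw [hmulD, hvec_inr, ha0, haL, hs0, Pi.single_apply, hi₁, ite_ll, ite_rl, add_zero]
        · intro i
          show g (Sum.inr (Sum.inr i)) = ε * (Pi.single (pvert (Fin.last s)) 1 : Fin n → ℤ) i
          rw [hmulD, hvec_inr, ha0, haL, hsL, Pi.single_apply, hj₁, ite_lr, ite_rr, zero_add]
      · -- pattern 2: (e_i - e_j, 0)
        refine ⟨ε, hεunit, Or.inr (Or.inl ⟨s, hs1,
          ⟨parc, fun k => D.sign ⟨k.val + 1, by omega⟩, pvert, hp_ainj, hp_vinj, hp_step⟩,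
          hginl, Or.inr (Or.inl ⟨?_, ?_⟩)⟩)⟩
        · intro i
          show g (Sum.inr (Sum.inl i)) = ε * ((Pi.single (pvert 0) 1 : Fin n → ℤ) i
            - (Pi.single (pvert (Fin.last s)) 1 : Fin n → ℤ) i)
          rw [hmulD, hvec_inr, ha0, haL, hs0, hsL, Pi.single_apply, Pi.single_apply, hi₁, hj₁,
            ite_ll, ite_ll]
          split_ifs <;> ring
        · intro i
          rw [hmulD, hvec_inr, ha0, haL, ite_lr, ite_lr, add_zero, mul_zero]
      · -- pattern 3: (0, -e_i + e_j)
        refine ⟨ε, hεunit, Or.inr (Or.inl ⟨s, hs1,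
          ⟨parc, fun k => D.sign ⟨k.val + 1, by omega⟩, pvert, hp_ainj, hp_vinj, hp_step⟩,
          hginl, Or.inr (Or.inr (Or.inl ⟨?_, ?_⟩))⟩)⟩
        · intro i
          rw [hmulD, hvec_inr, ha0, haL, ite_rl, ite_rl, add_zero, mul_zero]
        · intro i
          show g (Sum.inr (Sum.inr i)) = ε * (-(Pi.single (pvert 0) 1 : Fin n → ℤ) i
            + (Pi.single (pvert (Fin.last s)) 1 : Fin n → ℤ) i)
          rw [hmulD, hvec_inr, ha0, haL, hs0, hsL, Pi.single_apply, Pi.single_apply, hi₁, hj₁,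
            ite_rr, ite_rr]
          split_ifs <;> ring
      · -- pattern 4: (-e_j, -e_i)
        refine ⟨ε, hεunit, Or.inr (Or.inl ⟨s, hs1,
          ⟨parc, fun k => D.sign ⟨k.val + 1, by omega⟩, pvert, hp_ainj, hp_vinj, hp_step⟩,
          hginl, Or.inr (Or.inr (Or.inr ⟨?_, ?_⟩))⟩)⟩
        · intro i
          show g (Sum.inr (Sum.inl i)) = -(ε * (Pi.single (pvert (Fin.last s)) 1 : Fin n → ℤ) i)
          rw [hmulD, hvec_inr, ha0, haL, hsL, Pi.single_apply, hj₁, ite_rl, ite_ll, zero_add]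
          split_ifs <;> ring
        · intro i
          show g (Sum.inr (Sum.inr i)) = -(ε * (Pi.single (pvert 0) 1 : Fin n → ℤ) i)
          rw [hmulD, hvec_inr, ha0, haL, hs0, Pi.single_apply, hi₁, ite_rr, ite_lr, add_zero]
          split_ifs <;> ring



  · -- pure cycle in G
    push_neg at hdum
    have harc : ∀ k, ∃ e, C.arc k = Sum.inl e := by
      intro k
      rcases hA : C.arc k with e | j | j
      · exact ⟨e, rfl⟩
      · exfalso
        rcases C.step k with ⟨_, h2, _⟩ | ⟨_, h2, _⟩ <;> rw [hA] at h2 <;>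
          simp only [tV_inrl] at h2 <;> exact hdum _ h2.symm
      · exfalso
        rcases C.step k with ⟨_, _, h3⟩ | ⟨_, _, h3⟩ <;> rw [hA] at h3 <;>
          simp only [hV_inrr] at h3 <;> exact hdum _ h3.symm
    choose carc hcarc using harc
    have hvert : ∀ k, ∃ i, C.vert k = Sum.inl i := by
      intro k
      rcases hv : C.vert k with i | u
      · exact ⟨i, rfl⟩
      · cases u; exact absurd hv (fun hh => hdum k hh)
    choose cvert hcvert using hvert
    have hainj : Function.Injective carc := by
      intro a b hab
      exact C.arc_inj (by rw [hcarc a, hcarc b, hab])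
    have hvinj : Function.Injective cvert := by
      intro a b hab
      exact C.vert_inj (by rw [hcvert a, hcvert b, hab])
    have hstepc : ∀ k : Fin r,
        (C.sign k = 1 ∧ tail (carc k) = cvert k ∧
          head (carc k) = cvert ⟨(k.val + 1) % r, Nat.mod_lt _ C.hr⟩) ∨
        (C.sign k = -1 ∧ tail (carc k) = cvert ⟨(k.val + 1) % r, Nat.mod_lt _ C.hr⟩ ∧
          head (carc k) = cvert k) := by
      intro k
      rcases C.step k with ⟨h1, h2, h3⟩ | ⟨h1, h2, h3⟩
      · left
        refine ⟨h1, ?_, ?_⟩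
        · have := h2
          rw [hcarc k, tV_inl, hcvert k] at this
          exact Sum.inl_injective this
        · have := h3
          rw [hcarc k, hV_inl, hcvert _] at this
          exact Sum.inl_injective this
      · right
        refine ⟨h1, ?_, ?_⟩
        · have := h2
          rw [hcarc k, tV_inl, hcvert _] at this
          exact Sum.inl_injective this
        · have := h3
          rw [hcarc k, hV_inl, hcvert k] at this
          exact Sum.inl_injective this
    refine ⟨ε, hεunit, Or.inl ⟨r, ⟨C.hr, carc, C.sign, cvert, hainj, hvinj, hstepc⟩, ?_, ?_, ?_⟩⟩
    · intro e
      rw [hmul (Sum.inl e)]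
      congr 1
      unfold GCycle.vec SimpleCycle.vec
      apply Finset.sum_congr rfl
      intro k _
      rw [hcarc k]
      simp only [Sum.inl.injEq]
    · intro i
      rw [hmul (Sum.inr (Sum.inl i)), C.vec_not_mem, mul_zero]
      intro k
      rw [hcarc k]
      simp
    · intro i
      rw [hmul (Sum.inr (Sum.inr i)), C.vec_not_mem, mul_zero]
      intro k
      rw [hcarc k]
      simp
end

section
/- Let M₁ and M₂ be partial matchings between L and T whose symmetric difference is a single augmenting alternating path (so |M₂| = |M₁| + 1), and let y₁, y₂ be the corresponding vertices of the face F of the assignment pseudoflow polyhedron. Let q = |M₁ ∩ M₂| and k = |M₁ \ M₂|. Define a cost vector c by c_{ij} = 1 if (i,j) ∈ M₁, c_{ij} = k/(k+1) if (i,j) ∈ M₂ \ M₁, c_{ij} = -1 otherwise, and 0 on all slack arcs. Then c^T y₁ = c^T y₂ = q + k, and c^T y₃ < q + k for every vertex y₃ of F distinct from y₁ and y₂. Consequently y₁ and y₂ are endpoints of an edge of F. -/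
def assignFace (nn : ℕ) : Set ((Fin nn → Fin nn → ℝ) × (Fin nn → ℝ) × (Fin nn → ℝ)) :=
  {p | (∀ l t, 0 ≤ p.1 l t ∧ p.1 l t ≤ 1) ∧
       (∀ l, 0 ≤ p.2.1 l) ∧ (∀ t, 0 ≤ p.2.2 t) ∧
       (∀ l, (∑ t, p.1 l t) + p.2.1 l = 1) ∧
       (∀ t, (∑ l, p.1 l t) + p.2.2 t = 1)}

def IsPartialMatching {nn : ℕ} (M : Finset (Fin nn × Fin nn)) : Prop :=
  ∀ a ∈ M, ∀ b ∈ M, a ≠ b → a.1 ≠ b.1 ∧ a.2 ≠ b.2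

/-- The point of the face `F` corresponding to a partial matching `M`. -/
noncomputable def vertexOf {nn : ℕ} (M : Finset (Fin nn × Fin nn)) :
    (Fin nn → Fin nn → ℝ) × (Fin nn → ℝ) × (Fin nn → ℝ) :=
  (fun l t => if (l, t) ∈ M then 1 else 0,
   fun l => 1 - ∑ t, if (l, t) ∈ M then (1 : ℝ) else 0,
   fun t => 1 - ∑ l, if (l, t) ∈ M then (1 : ℝ) else 0)

/-- Objective value `c ᵀ y` (slack arcs have cost `0`). -/
noncomputable def dotc {nn : ℕ} (c : Fin nn × Fin nn → ℝ)
    (p : (Fin nn → Fin nn → ℝ) × (Fin nn → ℝ) × (Fin nn → ℝ)) : ℝ :=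
  ∑ l, ∑ t, c (l, t) * p.1 l t

/-!
Node potentials `u (L i) = i / (k + 1)`, `v (T i) = (k - i) / (k + 1)`, `u = 1` on the rows
matched by `M₁ ∩ M₂` and `0` elsewhere form a dual solution: `u, v ≥ 0`, `c ≤ u + v` arcwise with
equality exactly on `M₁ ∪ M₂`, and `∑ u + ∑ v = q + k`. Weak duality bounds `cᵀ y` by `q + k`
on `F`, and `y₁, y₂` attain it. Complementary slackness forces an optimal `y` to vanish off
`M₁ ∪ M₂` and to saturate the rows and columns where the potential is positive; along the
alternating path this propagates one value `λ = y (L 0) (T 0)` on the arcs of `M₂` and `1 - λ` on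
those of `M₁`, so `y = (1 - λ) y₁ + λ y₂`. An extreme point on this segment is an endpoint.
-/

open Finset

variable {nn : ℕ}

theorem IsPartialMatching.snd_eq {M : Finset (Fin nn × Fin nn)} (hM : IsPartialMatching M)
    {l t t' : Fin nn} (h : (l, t) ∈ M) (h' : (l, t') ∈ M) : t = t' := by
  by_contra hne
  exact (hM _ h _ h' (by simp [hne])).1 rfl

theorem IsPartialMatching.fst_eq {M : Finset (Fin nn × Fin nn)} (hM : IsPartialMatching M)
    {l l' t : Fin nn} (h : (l, t) ∈ M) (h' : (l', t) ∈ M) : l = l' := by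
  by_contra hne
  exact (hM _ h _ h' (by simp [hne])).2 rfl

theorem IsPartialMatching.sum_row_le_one {M : Finset (Fin nn × Fin nn)}
    (hM : IsPartialMatching M) (l : Fin nn) : (∑ t, if (l, t) ∈ M then (1 : ℝ) else 0) ≤ 1 := by
  rw [sum_boole]
  exact_mod_cast card_le_one.2 fun t ht t' ht' =>
    hM.snd_eq (mem_filter.1 ht).2 (mem_filter.1 ht').2

theorem IsPartialMatching.sum_col_le_one {M : Finset (Fin nn × Fin nn)}
    (hM : IsPartialMatching M) (t : Fin nn) : (∑ l, if (l, t) ∈ M then (1 : ℝ) else 0) ≤ 1 := by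
  rw [sum_boole]
  exact_mod_cast card_le_one.2 fun l hl l' hl' =>
    hM.fst_eq (mem_filter.1 hl).2 (mem_filter.1 hl').2

theorem vertexOf_mem_assignFace {M : Finset (Fin nn × Fin nn)} (hM : IsPartialMatching M) :
    vertexOf M ∈ assignFace nn := by
  refine ⟨fun l t => ?_, fun l => ?_, fun t => ?_, fun l => ?_, fun t => ?_⟩ <;> dsimp [vertexOf]
  · split <;> norm_num
  · linarith [hM.sum_row_le_one l]
  · linarith [hM.sum_col_le_one t]
  · ring
  · ring

theorem convex_assignFace (nn : ℕ) : Convex ℝ (assignFace nn) := by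
  rintro p ⟨hp1, hp2, hp3, hp4, hp5⟩ q ⟨hq1, hq2, hq3, hq4, hq5⟩ a b ha hb hab
  refine ⟨fun l t => ⟨?_, ?_⟩, fun l => ?_, fun t => ?_, fun l => ?_, fun t => ?_⟩ <;>
    simp only [Prod.fst_add, Prod.smul_fst, Prod.snd_add, Prod.smul_snd, Pi.add_apply,
      Pi.smul_apply, smul_eq_mul, sum_add_distrib, ← mul_sum]
  · nlinarith [(hp1 l t).1, (hq1 l t).1]
  · nlinarith [(hp1 l t).2, (hq1 l t).2]
  · nlinarith [hp2 l, hq2 l]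
  · nlinarith [hp3 t, hq3 t]
  · linear_combination a * hp4 l + b * hq4 l + hab
  · linear_combination a * hp5 t + b * hq5 t + hab

theorem eq_of_mem_assignFace_of_fst_eq
    {p q : (Fin nn → Fin nn → ℝ) × (Fin nn → ℝ) × (Fin nn → ℝ)} (hp : p ∈ assignFace nn)
    (hq : q ∈ assignFace nn) (h : p.1 = q.1) : p = q := by
  obtain ⟨-, -, -, hp4, hp5⟩ := hp
  obtain ⟨-, -, -, hq4, hq5⟩ := hq
  rw [h] at hp4 hp5
  exact Prod.ext h (Prod.ext (funext fun l => by linarith [hp4 l, hq4 l])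
    (funext fun t => by linarith [hp5 t, hq5 t]))

theorem dotc_smul_add_smul (c : Fin nn × Fin nn → ℝ) (a b : ℝ)
    (p q : (Fin nn → Fin nn → ℝ) × (Fin nn → ℝ) × (Fin nn → ℝ)) :
    dotc c (a • p + b • q) = a * dotc c p + b * dotc c q := by
  simp only [dotc, mul_sum, ← sum_add_distrib, Prod.fst_add, Prod.smul_fst, Pi.add_apply,
    Pi.smul_apply, smul_eq_mul]
  exact sum_congr rfl fun l _ => sum_congr rfl fun t _ => by ring

theorem dotc_vertexOf (c : Fin nn × Fin nn → ℝ) (M : Finset (Fin nn × Fin nn)) :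
    dotc c (vertexOf M) = ∑ a ∈ M, c a := by
  simp only [dotc, vertexOf, mul_ite, mul_one, mul_zero]
  rw [← sum_product', ← sum_filter, univ_product_univ, filter_mem_eq_inter, univ_inter]

def dualGap (c : Fin nn × Fin nn → ℝ) (u v : Fin nn → ℝ)
    (p : (Fin nn → Fin nn → ℝ) × (Fin nn → ℝ) × (Fin nn → ℝ)) : ℝ :=
  ∑ l, ∑ t, (u l + v t - c (l, t)) * p.1 l t + ∑ l, u l * p.2.1 l + ∑ t, v t * p.2.2 t

section Duality

variable (c : Fin nn × Fin nn → ℝ) {u v : Fin nn → ℝ}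
  {p : (Fin nn → Fin nn → ℝ) × (Fin nn → ℝ) × (Fin nn → ℝ)}

theorem dotc_add_dualGap (hp : p ∈ assignFace nn) :
    dotc c p + dualGap c u v p = ∑ l, u l + ∑ t, v t := by
  have hrow : ∀ l, ∑ t, p.1 l t = 1 - p.2.1 l := fun l => by linarith [hp.2.2.2.1 l]
  have hcol : ∀ t, ∑ l, p.1 l t = 1 - p.2.2 t := fun t => by linarith [hp.2.2.2.2 t]
  have hsplit : ∀ l t, c (l, t) * p.1 l t + (u l + v t - c (l, t)) * p.1 l t
      = u l * p.1 l t + v t * p.1 l t := fun l t => by ring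
  have hdouble : ∑ l, ∑ t, (u l * p.1 l t + v t * p.1 l t)
      = ∑ l, u l * (1 - p.2.1 l) + ∑ t, v t * (1 - p.2.2 t) := by
    simp only [sum_add_distrib, ← hrow, ← hcol, mul_sum]
    rw [sum_comm (f := fun l t => v t * p.1 l t)]
  have hdotc : dotc c p + ∑ l, ∑ t, (u l + v t - c (l, t)) * p.1 l t
      = ∑ l, ∑ t, (u l * p.1 l t + v t * p.1 l t) := by
    simp only [dotc, ← sum_add_distrib, hsplit]
  simp only [dualGap, ← add_assoc, hdotc, hdouble, mul_sub, mul_one, sum_sub_distrib]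
  ring

theorem dualGap_nonneg (hp : p ∈ assignFace nn) (hu : ∀ l, 0 ≤ u l) (hv : ∀ t, 0 ≤ v t)
    (hc : ∀ l t, c (l, t) ≤ u l + v t) : 0 ≤ dualGap c u v p := by
  obtain ⟨hp1, hp2, hp3, -, -⟩ := hp
  unfold dualGap
  have := sum_nonneg fun l (_ : l ∈ univ) =>
    sum_nonneg fun t (_ : t ∈ univ) => mul_nonneg (sub_nonneg.2 (hc l t)) (hp1 l t).1
  have := sum_nonneg fun l (_ : l ∈ univ) => mul_nonneg (hu l) (hp2 l)
  have := sum_nonneg fun t (_ : t ∈ univ) => mul_nonneg (hv t) (hp3 t)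
  linarith

theorem complementary_slackness (hp : p ∈ assignFace nn) (hu : ∀ l, 0 ≤ u l)
    (hv : ∀ t, 0 ≤ v t) (hc : ∀ l t, c (l, t) ≤ u l + v t) (hgap : dualGap c u v p = 0) :
    (∀ l t, c (l, t) < u l + v t → p.1 l t = 0) ∧
    (∀ l, 0 < u l → ∑ t, p.1 l t = 1) ∧ (∀ t, 0 < v t → ∑ l, p.1 l t = 1) := by
  obtain ⟨hp1, hp2, hp3, hp4, hp5⟩ := hp
  have hA : ∀ l t, 0 ≤ (u l + v t - c (l, t)) * p.1 l t :=
    fun l t => mul_nonneg (sub_nonneg.2 (hc l t)) (hp1 l t).1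
  have hB : ∀ l, 0 ≤ u l * p.2.1 l := fun l => mul_nonneg (hu l) (hp2 l)
  have hC : ∀ t, 0 ≤ v t * p.2.2 t := fun t => mul_nonneg (hv t) (hp3 t)
  rw [dualGap, add_eq_zero_iff_of_nonneg
      (add_nonneg (sum_nonneg fun l _ => sum_nonneg fun t _ => hA l t)
        (sum_nonneg fun l _ => hB l)) (sum_nonneg fun t _ => hC t),
    add_eq_zero_iff_of_nonneg (sum_nonneg fun l _ => sum_nonneg fun t _ => hA l t)
        (sum_nonneg fun l _ => hB l),
    sum_eq_zero_iff_of_nonneg fun l _ => sum_nonneg fun t _ => hA l t,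
    sum_eq_zero_iff_of_nonneg fun l _ => hB l, sum_eq_zero_iff_of_nonneg fun t _ => hC t] at hgap
  obtain ⟨⟨hA0, hB0⟩, hC0⟩ := hgap
  refine ⟨fun l t hlt => ?_, fun l hl => ?_, fun t ht => ?_⟩
  · have := (sum_eq_zero_iff_of_nonneg fun t _ => hA l t).1 (hA0 l (mem_univ l)) t (mem_univ t)
    exact (mul_eq_zero.1 this).resolve_left (sub_pos.2 hlt).ne'
  · have := (mul_eq_zero.1 (hB0 l (mem_univ l))).resolve_left hl.ne'
    linarith [hp4 l]
  · have := (mul_eq_zero.1 (hC0 t (mem_univ t))).resolve_left ht.ne'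
    linarith [hp5 t]

end Duality

section Support

variable {M₁ M₂ : Finset (Fin nn × Fin nn)} {x : Fin nn → Fin nn → ℝ}

theorem sum_row_eq_add_of_support (h₁ : IsPartialMatching M₁) (h₂ : IsPartialMatching M₂)
    (hx : ∀ l t, (l, t) ∉ M₁ ∪ M₂ → x l t = 0) {l t₁ t₂ : Fin nn} (ht₁ : (l, t₁) ∈ M₁)
    (ht₂ : (l, t₂) ∈ M₂) (hne : t₁ ≠ t₂) : ∑ t, x l t = x l t₁ + x l t₂ :=
  Fintype.sum_eq_add _ _ hne fun t ⟨hne₁, hne₂⟩ => hx l t fun h =>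
    (mem_union.1 h).elim (fun h => hne₁ (h₁.snd_eq h ht₁)) (fun h => hne₂ (h₂.snd_eq h ht₂))

theorem sum_col_eq_add_of_support (h₁ : IsPartialMatching M₁) (h₂ : IsPartialMatching M₂)
    (hx : ∀ l t, (l, t) ∉ M₁ ∪ M₂ → x l t = 0) {l₁ l₂ t : Fin nn} (hl₁ : (l₁, t) ∈ M₁)
    (hl₂ : (l₂, t) ∈ M₂) (hne : l₁ ≠ l₂) : ∑ l, x l t = x l₁ t + x l₂ t :=
  Fintype.sum_eq_add _ _ hne fun l ⟨hne₁, hne₂⟩ => hx l t fun h =>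
    (mem_union.1 h).elim (fun h => hne₁ (h₁.fst_eq h hl₁)) (fun h => hne₂ (h₂.fst_eq h hl₂))

theorem sum_row_eq_of_support (h₁ : IsPartialMatching M₁) (h₂ : IsPartialMatching M₂)
    (hx : ∀ l t, (l, t) ∉ M₁ ∪ M₂ → x l t = 0) {l t₀ : Fin nn} (ht₀ : (l, t₀) ∈ M₁ ∩ M₂) :
    ∑ t, x l t = x l t₀ :=
  Fintype.sum_eq_single _ fun t hne => hx l t fun h => (mem_union.1 h).elim
    (fun h => hne (h₁.snd_eq h (mem_inter.1 ht₀).1))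
    (fun h => hne (h₂.snd_eq h (mem_inter.1 ht₀).2))

end Support

variable {k : ℕ}

noncomputable def pathCost (M₁ M₂ : Finset (Fin nn × Fin nn)) (k : ℕ) (a : Fin nn × Fin nn) : ℝ :=
  if a ∈ M₁ then 1 else if a ∈ M₂ then (k : ℝ) / (k + 1) else -1

/-- The path is `L 0, T 0, L 1, T 1, …, L k, T k`: its arcs `(L i, T i)` lie in `M₂` and its
arcs `(L (i + 1), T i)` in `M₁`. -/
structure IsAugmentingPath (M₁ M₂ : Finset (Fin nn × Fin nn)) (L T : Fin (k + 1) → Fin nn) :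
    Prop where
  matching₁ : IsPartialMatching M₁
  matching₂ : IsPartialMatching M₂
  injective_L : Function.Injective L
  injective_T : Function.Injective T
  sdiff_eq₂₁ : M₂ \ M₁ = image (fun i => (L i, T i)) univ
  sdiff_eq₁₂ : M₁ \ M₂ = image (fun i : Fin k => (L i.succ, T i.castSucc)) univ

noncomputable def rowPotential (M₁ M₂ : Finset (Fin nn × Fin nn)) (L : Fin (k + 1) → Fin nn)
    (l : Fin nn) : ℝ :=
  (∑ i, if L i = l then (i : ℝ) / (k + 1) else 0) +
    if l ∈ (M₁ ∩ M₂).image Prod.fst then 1 else 0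

noncomputable def colPotential (T : Fin (k + 1) → Fin nn) (t : Fin nn) : ℝ :=
  ∑ i, if T i = t then ((k : ℝ) - i) / (k + 1) else 0

theorem pathCost_of_mem {M₁ M₂ : Finset (Fin nn × Fin nn)} {a : Fin nn × Fin nn} (ha : a ∈ M₁) :
    pathCost M₁ M₂ k a = 1 :=
  if_pos ha

theorem pathCost_of_mem_sdiff {M₁ M₂ : Finset (Fin nn × Fin nn)} {a : Fin nn × Fin nn}
    (ha : a ∈ M₂ \ M₁) : pathCost M₁ M₂ k a = k / (k + 1) :=
  (if_neg (mem_sdiff.1 ha).2).trans (if_pos (mem_sdiff.1 ha).1)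

theorem rowPotential_nonneg (M₁ M₂ : Finset (Fin nn × Fin nn)) (L : Fin (k + 1) → Fin nn)
    (l : Fin nn) : 0 ≤ rowPotential M₁ M₂ L l :=
  add_nonneg (sum_nonneg fun i _ => by split <;> positivity) (by split <;> norm_num)

theorem colPotential_nonneg (T : Fin (k + 1) → Fin nn) (t : Fin nn) : 0 ≤ colPotential T t :=
  sum_nonneg fun i _ => by
    have : (i : ℝ) ≤ k := by exact_mod_cast Nat.lt_succ_iff.1 i.isLt
    split
    · exact div_nonneg (by linarith) (by positivity)
    · rfl

theorem pathCost_lt_potential {M₁ M₂ : Finset (Fin nn × Fin nn)} {L T : Fin (k + 1) → Fin nn}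
    {a : Fin nn × Fin nn} (ha : a ∉ M₁ ∪ M₂) :
    pathCost M₁ M₂ k a < rowPotential M₁ M₂ L a.1 + colPotential T a.2 := by
  rw [pathCost, if_neg fun h => ha (mem_union_left _ h), if_neg fun h => ha (mem_union_right _ h)]
  linarith [rowPotential_nonneg M₁ M₂ L a.1, colPotential_nonneg T a.2]

namespace IsAugmentingPath

variable {M₁ M₂ : Finset (Fin nn × Fin nn)} {L T : Fin (k + 1) → Fin nn}

theorem mem_sdiff₂₁ (hP : IsAugmentingPath M₁ M₂ L T) (i : Fin (k + 1)) :
    (L i, T i) ∈ M₂ \ M₁ :=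
  hP.sdiff_eq₂₁ ▸ mem_image_of_mem _ (mem_univ i)

theorem mem_sdiff₁₂ (hP : IsAugmentingPath M₁ M₂ L T) (i : Fin k) :
    (L i.succ, T i.castSucc) ∈ M₁ \ M₂ :=
  hP.sdiff_eq₁₂ ▸ mem_image_of_mem _ (mem_univ i)

theorem card_sdiff₂₁ (hP : IsAugmentingPath M₁ M₂ L T) : (M₂ \ M₁).card = k + 1 := by
  rw [hP.sdiff_eq₂₁, card_image_of_injective _ fun i j h => hP.injective_L (congrArg Prod.fst h),
    card_univ, Fintype.card_fin]

theorem card_sdiff₁₂ (hP : IsAugmentingPath M₁ M₂ L T) : (M₁ \ M₂).card = k := by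
  rw [hP.sdiff_eq₁₂, card_image_of_injective _ fun i j h =>
    Fin.succ_injective _ (hP.injective_L (congrArg Prod.fst h)), card_univ, Fintype.card_fin]

theorem fst_notMem_inter (hP : IsAugmentingPath M₁ M₂ L T) (i : Fin (k + 1)) (t : Fin nn) :
    (L i, t) ∉ M₁ ∩ M₂ := fun h => by
  obtain ⟨hi₂, hi₁⟩ := mem_sdiff.1 (hP.mem_sdiff₂₁ i)
  rw [hP.matching₂.snd_eq hi₂ (mem_inter.1 h).2] at hi₁
  exact hi₁ (mem_inter.1 h).1

theorem snd_notMem_inter (hP : IsAugmentingPath M₁ M₂ L T) (i : Fin (k + 1)) (l : Fin nn) :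
    (l, T i) ∉ M₁ ∩ M₂ := fun h => by
  obtain ⟨hi₂, hi₁⟩ := mem_sdiff.1 (hP.mem_sdiff₂₁ i)
  rw [hP.matching₂.fst_eq hi₂ (mem_inter.1 h).2] at hi₁
  exact hi₁ (mem_inter.1 h).1

theorem rowPotential_L (hP : IsAugmentingPath M₁ M₂ L T) (i : Fin (k + 1)) :
    rowPotential M₁ M₂ L (L i) = i / (k + 1) := by
  have hi : L i ∉ (M₁ ∩ M₂).image Prod.fst := fun h => by
    obtain ⟨⟨l, t⟩, ha, rfl⟩ := mem_image.1 h
    exact hP.fst_notMem_inter i t ha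
  simp [rowPotential, hi, hP.injective_L.eq_iff]

theorem rowPotential_of_mem_inter (hP : IsAugmentingPath M₁ M₂ L T) {a : Fin nn × Fin nn}
    (ha : a ∈ M₁ ∩ M₂) : rowPotential M₁ M₂ L a.1 = 1 := by
  have hL : ∀ i, L i ≠ a.1 := fun i h => hP.fst_notMem_inter i a.2 (by rwa [h])
  simp [rowPotential, hL, mem_image_of_mem Prod.fst ha]

theorem colPotential_T (hP : IsAugmentingPath M₁ M₂ L T) (i : Fin (k + 1)) :
    colPotential T (T i) = (k - i) / (k + 1) := by
  simp [colPotential, hP.injective_T.eq_iff]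

theorem colPotential_of_mem_inter (hP : IsAugmentingPath M₁ M₂ L T) {a : Fin nn × Fin nn}
    (ha : a ∈ M₁ ∩ M₂) : colPotential T a.2 = 0 := by
  have hT : ∀ i, T i ≠ a.2 := fun i h => hP.snd_notMem_inter i a.1 (by rwa [h])
  simp [colPotential, hT]

theorem sum_rowPotential_add_sum_colPotential (hP : IsAugmentingPath M₁ M₂ L T) :
    ∑ l, rowPotential M₁ M₂ L l + ∑ t, colPotential T t = (M₁ ∩ M₂).card + k := by
  have hinj : Set.InjOn Prod.fst (M₁ ∩ M₂ : Finset (Fin nn × Fin nn)) :=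
    fun a ha b hb hab => by_contra fun hne => (hP.matching₁ a (mem_inter.1 ha).1 b
      (mem_inter.1 hb).1 hne).1 hab
  have hpath : ∑ i : Fin (k + 1), (i : ℝ) / (k + 1) + ∑ i : Fin (k + 1), ((k : ℝ) - i) / (k + 1)
      = k := by
    have hk : (k : ℝ) + 1 ≠ 0 := by positivity
    simp only [← sum_add_distrib, ← add_div, add_sub_cancel, sum_const, card_univ,
      Fintype.card_fin, nsmul_eq_mul]
    push_cast
    field_simp
  simp only [rowPotential, colPotential, sum_add_distrib]
  rw [sum_comm, sum_comm (f := fun t i => if T i = t then ((k : ℝ) - i) / (k + 1) else 0),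
    sum_boole, filter_univ_mem, card_image_of_injOn hinj]
  simp only [sum_ite_eq, mem_univ, if_true]
  linarith

theorem pathCost_eq_potential (hP : IsAugmentingPath M₁ M₂ L T) {a : Fin nn × Fin nn}
    (ha : a ∈ M₁ ∪ M₂) : pathCost M₁ M₂ k a = rowPotential M₁ M₂ L a.1 + colPotential T a.2 := by
  have hk : (k : ℝ) + 1 ≠ 0 := by positivity
  by_cases ha₁ : a ∈ M₁ <;> by_cases ha₂ : a ∈ M₂
  · rw [pathCost_of_mem ha₁, hP.rowPotential_of_mem_inter (mem_inter.2 ⟨ha₁, ha₂⟩),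
      hP.colPotential_of_mem_inter (mem_inter.2 ⟨ha₁, ha₂⟩), add_zero]
  · obtain ⟨i, -, rfl⟩ := mem_image.1 (hP.sdiff_eq₁₂ ▸ mem_sdiff.2 ⟨ha₁, ha₂⟩)
    rw [pathCost_of_mem ha₁, hP.rowPotential_L, hP.colPotential_T, Fin.val_succ,
      Fin.val_castSucc]
    field_simp
    push_cast
    ring
  · obtain ⟨i, -, rfl⟩ := mem_image.1 (hP.sdiff_eq₂₁ ▸ mem_sdiff.2 ⟨ha₂, ha₁⟩)
    rw [pathCost_of_mem_sdiff (mem_sdiff.2 ⟨ha₂, ha₁⟩), hP.rowPotential_L, hP.colPotential_T,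
      ← add_div]
    ring
  · exact absurd ha (by simp [ha₁, ha₂])

theorem pathCost_le_potential (hP : IsAugmentingPath M₁ M₂ L T) (l t : Fin nn) :
    pathCost M₁ M₂ k (l, t) ≤ rowPotential M₁ M₂ L l + colPotential T t := by
  by_cases ha : (l, t) ∈ M₁ ∪ M₂
  · exact (hP.pathCost_eq_potential ha).le
  · exact (pathCost_lt_potential ha).le

theorem dotc_vertexOf₁ (hP : IsAugmentingPath M₁ M₂ L T) :
    dotc (pathCost M₁ M₂ k) (vertexOf M₁) = (M₁ ∩ M₂).card + k := by
  rw [dotc_vertexOf, sum_congr rfl fun a ha => pathCost_of_mem ha, sum_const, nsmul_one,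
    ← card_inter_add_card_sdiff M₁ M₂, hP.card_sdiff₁₂, Nat.cast_add]

theorem dotc_vertexOf₂ (hP : IsAugmentingPath M₁ M₂ L T) :
    dotc (pathCost M₁ M₂ k) (vertexOf M₂) = (M₁ ∩ M₂).card + k := by
  have hk : (k : ℝ) + 1 ≠ 0 := by positivity
  rw [dotc_vertexOf, ← sum_inter_add_sum_sdiff M₂ M₁, inter_comm,
    sum_congr rfl fun a ha => pathCost_of_mem (mem_inter.1 ha).1,
    sum_congr rfl fun a ha => pathCost_of_mem_sdiff ha,
    sum_const, sum_const, hP.card_sdiff₂₁, nsmul_one, nsmul_eq_mul]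
  push_cast
  field_simp

variable {p : (Fin nn → Fin nn → ℝ) × (Fin nn → ℝ) × (Fin nn → ℝ)}

theorem dotc_add_dualGap_eq (hP : IsAugmentingPath M₁ M₂ L T) (hp : p ∈ assignFace nn) :
    dotc (pathCost M₁ M₂ k) p +
      dualGap (pathCost M₁ M₂ k) (rowPotential M₁ M₂ L) (colPotential T) p =
      (M₁ ∩ M₂).card + k := by
  rw [dotc_add_dualGap _ hp, hP.sum_rowPotential_add_sum_colPotential]

theorem dotc_le (hP : IsAugmentingPath M₁ M₂ L T) (hp : p ∈ assignFace nn) :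
    dotc (pathCost M₁ M₂ k) p ≤ (M₁ ∩ M₂).card + k := by
  linarith [hP.dotc_add_dualGap_eq hp, dualGap_nonneg _ hp (rowPotential_nonneg M₁ M₂ L)
    (colPotential_nonneg T) hP.pathCost_le_potential]

theorem dotc_of_mem_segment (hP : IsAugmentingPath M₁ M₂ L T)
    (hp : p ∈ segment ℝ (vertexOf M₁) (vertexOf M₂)) :
    dotc (pathCost M₁ M₂ k) p = (M₁ ∩ M₂).card + k := by
  obtain ⟨a, b, -, -, hab, rfl⟩ := hp
  rw [dotc_smul_add_smul, hP.dotc_vertexOf₁, hP.dotc_vertexOf₂, ← add_mul, hab, one_mul]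

theorem slackness_of_dotc_eq (hP : IsAugmentingPath M₁ M₂ L T) (hp : p ∈ assignFace nn)
    (h : dotc (pathCost M₁ M₂ k) p = (M₁ ∩ M₂).card + k) :
    (∀ l t, (l, t) ∉ M₁ ∪ M₂ → p.1 l t = 0) ∧ (∀ a ∈ M₁ ∩ M₂, ∑ t, p.1 a.1 t = 1) ∧
      (∀ i : Fin k, ∑ t, p.1 (L i.succ) t = 1) ∧
      (∀ i : Fin k, ∑ l, p.1 l (T i.castSucc) = 1) := by
  obtain ⟨hsupp, hrow, hcol⟩ := complementary_slackness _ hp (rowPotential_nonneg M₁ M₂ L)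
    (colPotential_nonneg T) hP.pathCost_le_potential (by linarith [hP.dotc_add_dualGap_eq hp])
  have hk : (0 : ℝ) < k + 1 := by positivity
  refine ⟨fun l t h => hsupp l t (pathCost_lt_potential h), fun a ha => hrow _ ?_,
    fun i => hrow _ ?_, fun i => hcol _ ?_⟩
  · rw [hP.rowPotential_of_mem_inter ha]
    exact one_pos
  · rw [hP.rowPotential_L, Fin.val_succ]
    exact div_pos (by positivity) hk
  · rw [hP.colPotential_T, Fin.val_castSucc]
    exact div_pos (by simp) hk

theorem eq_of_support (hP : IsAugmentingPath M₁ M₂ L T) {x : Fin nn → Fin nn → ℝ}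
    (hsupp : ∀ l t, (l, t) ∉ M₁ ∪ M₂ → x l t = 0) (hinter : ∀ a ∈ M₁ ∩ M₂, ∑ t, x a.1 t = 1)
    (hrow : ∀ i : Fin k, ∑ t, x (L i.succ) t = 1)
    (hcol : ∀ i : Fin k, ∑ l, x l (T i.castSucc) = 1) (l t : Fin nn) :
    x l t = (1 - x (L 0) (T 0)) * (if (l, t) ∈ M₁ then 1 else 0) +
      x (L 0) (T 0) * (if (l, t) ∈ M₂ then 1 else 0) := by
  set μ := x (L 0) (T 0)
  have hM₁ (i : Fin k) := (mem_sdiff.1 (hP.mem_sdiff₁₂ i)).1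
  have hM₂ (i : Fin (k + 1)) := (mem_sdiff.1 (hP.mem_sdiff₂₁ i)).1
  have hlt (i : Fin k) : i.castSucc < i.succ := Fin.castSucc_lt_succ
  have hrow₂ (i : Fin k) : x (L i.succ) (T i.castSucc) + x (L i.succ) (T i.succ) = 1 :=
    (sum_row_eq_add_of_support hP.matching₁ hP.matching₂ hsupp (hM₁ i) (hM₂ i.succ)
      (hP.injective_T.ne (hlt i).ne)).symm.trans (hrow i)
  have hcol₂ (i : Fin k) : x (L i.succ) (T i.castSucc) + x (L i.castSucc) (T i.castSucc) = 1 :=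
    (sum_col_eq_add_of_support hP.matching₁ hP.matching₂ hsupp (hM₁ i) (hM₂ i.castSucc)
      (hP.injective_L.ne (hlt i).ne')).symm.trans (hcol i)
  have hnew (i : Fin (k + 1)) : x (L i) (T i) = μ :=
    Fin.induction (motive := fun i => x (L i) (T i) = μ) rfl
      (fun i ih => by linarith [hrow₂ i, hcol₂ i]) i
  have hold (i : Fin k) : x (L i.succ) (T i.castSucc) = 1 - μ := by
    linarith [hcol₂ i, hnew i.castSucc]
  by_cases h₁ : (l, t) ∈ M₁ <;> by_cases h₂ : (l, t) ∈ M₂ <;> simp only [h₁, h₂, if_true, if_false]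
  · rw [← sum_row_eq_of_support hP.matching₁ hP.matching₂ hsupp (mem_inter.2 ⟨h₁, h₂⟩),
      hinter (l, t) (mem_inter.2 ⟨h₁, h₂⟩)]
    ring
  · obtain ⟨i, -, hi⟩ := mem_image.1 (hP.sdiff_eq₁₂ ▸ mem_sdiff.2 ⟨h₁, h₂⟩)
    obtain ⟨rfl, rfl⟩ := Prod.mk.inj hi
    rw [hold]
    ring
  · obtain ⟨i, -, hi⟩ := mem_image.1 (hP.sdiff_eq₂₁ ▸ mem_sdiff.2 ⟨h₂, h₁⟩)
    obtain ⟨rfl, rfl⟩ := Prod.mk.inj hi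
    rw [hnew]
    ring
  · rw [hsupp l t (by simp [h₁, h₂])]
    ring

theorem mem_segment_of_dotc_eq (hP : IsAugmentingPath M₁ M₂ L T) (hp : p ∈ assignFace nn)
    (h : dotc (pathCost M₁ M₂ k) p = (M₁ ∩ M₂).card + k) :
    p ∈ segment ℝ (vertexOf M₁) (vertexOf M₂) := by
  obtain ⟨hsupp, hinter, hrow, hcol⟩ := hP.slackness_of_dotc_eq hp h
  obtain ⟨hμ₀, hμ₁⟩ := hp.1 (L 0) (T 0)
  refine ⟨1 - p.1 (L 0) (T 0), p.1 (L 0) (T 0), by linarith, hμ₀, by ring,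
    eq_of_mem_assignFace_of_fst_eq (convex_assignFace nn (vertexOf_mem_assignFace hP.matching₁)
      (vertexOf_mem_assignFace hP.matching₂) (by linarith) hμ₀ (by ring)) hp ?_⟩
  funext l t
  exact (hP.eq_of_support hsupp hinter hrow hcol l t).symm

end IsAugmentingPath

/-- if partial matchings `M₁, M₂` differ by a single augmenting
alternating path (so `|M₂| = |M₁| + 1`), `q = |M₁ ∩ M₂|`, `k = |M₁ \ M₂|`, and
`c` is `1` on `M₁`, `k/(k+1)` on `M₂ \ M₁`, `-1` elsewhere, `0` on slacks, then
`c ᵀ y₁ = c ᵀ y₂ = q + k`, every other vertex of `F` has strictly smaller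
objective, and hence `y₁, y₂` are the endpoints of an edge of `F`
(the optimal face of `c` is the segment `[y₁, y₂]`). -/
theorem augmenting_path_edge {nn k : ℕ}
    (M₁ M₂ : Finset (Fin nn × Fin nn))
    (h₁ : IsPartialMatching M₁) (h₂ : IsPartialMatching M₂)
    (L : Fin (k + 1) → Fin nn) (T : Fin (k + 1) → Fin nn)
    (hL : Function.Injective L) (hT : Function.Injective T)
    (hnew : M₂ \ M₁ = Finset.image (fun i => (L i, T i)) Finset.univ)
    (hold : M₁ \ M₂ = Finset.image (fun i : Fin k => (L i.succ, T i.castSucc)) Finset.univ)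
    (c : Fin nn × Fin nn → ℝ)
    (hc : ∀ a, c a = if a ∈ M₁ then 1 else if a ∈ M₂ then (k : ℝ) / (k + 1) else -1) :
    dotc c (vertexOf M₁) = ((M₁ ∩ M₂).card : ℝ) + k ∧
    dotc c (vertexOf M₂) = ((M₁ ∩ M₂).card : ℝ) + k ∧
    (∀ y₃ ∈ Set.extremePoints ℝ (assignFace nn), y₃ ≠ vertexOf M₁ → y₃ ≠ vertexOf M₂ →
      dotc c y₃ < ((M₁ ∩ M₂).card : ℝ) + k) ∧
    segment ℝ (vertexOf M₁) (vertexOf M₂) =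
      {y ∈ assignFace nn | ∀ z ∈ assignFace nn, dotc c z ≤ dotc c y} := by
  obtain rfl : c = pathCost M₁ M₂ k := funext hc
  have hP : IsAugmentingPath M₁ M₂ L T := ⟨h₁, h₂, hL, hT, hnew, hold⟩
  have hy₁ := vertexOf_mem_assignFace h₁
  have hy₂ := vertexOf_mem_assignFace h₂
  refine ⟨hP.dotc_vertexOf₁, hP.dotc_vertexOf₂, fun y hy hne₁ hne₂ => ?_, ?_⟩
  · refine (hP.dotc_le hy.1).lt_of_ne fun heq => ?_
    obtain h | h := (mem_extremePoints_iff_forall_segment.1 hy).2 _ hy₁ _ hy₂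
      (hP.mem_segment_of_dotc_eq hy.1 heq)
    exacts [hne₁ h.symm, hne₂ h.symm]
  · ext y
    refine ⟨fun hy => ⟨(convex_assignFace nn).segment_subset hy₁ hy₂ hy, fun z hz =>
      (hP.dotc_le hz).trans (hP.dotc_of_mem_segment hy).ge⟩, fun ⟨hyF, hmax⟩ => ?_⟩
    refine hP.mem_segment_of_dotc_eq hyF ((hP.dotc_le hyF).antisymm ?_)
    exact hP.dotc_vertexOf₁ ▸ hmax _ hy₁
end

section
/- Suppose a cost vector c on ℝ^{m+2n} assigns 0 to all x-arcs, cost 1 to the slack arcs s⁺_s and s⁻_t, and cost -M (with M > 3) to every other slack arc. Then among all circuits g of the pseudoflow polyhedron with entries in {-1,0,1} that do not decrease any slack variable (g⁺ ≥ 0 and g⁻ ≥ 0), the circuits with c^T g > 0 are exactly the path circuits of the form (H_{st}, e_s, e_t), i.e., signed s–t paths using slack arcs s⁺_s and s⁻_t, and each such circuit has c^T g = 2. -/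
/-!
Since the columns of the incidence matrix sum to zero, a circuit `g = (x, p, q)` with
`A x = p - q` has `∑ p = ∑ q =: P`, so its cost is `-2MP + (1 + M)(p_s + q_t)`. With `p, q`
taking values in `{0, 1}` and `M > 1` this is positive only when `P = p_s = q_t = 1`, i.e.
`p = e_s`, `q = e_t`, and then it equals `2`. In that case `x` is a `{-1, 0, 1}` flow of value
one from `s` to `t`; a cut argument shows that `t` is reachable from `s` along arcs traversed
in the direction of their flow, such a walk shortens to a simple path `H`, and `(H, e_s, e_t)`
is a kernel vector supported inside the support of `g`, so minimality of the circuit forces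
`g = (H, e_s, e_t)`.
-/

open Matrix

theorem List.exists_nodup_isChain_cons_of_relationReflTransGen {α : Type*} {r : α → α → Prop}
    {a b : α} (h : Relation.ReflTransGen r a b) :
    ∃ l, IsChain r (a :: l) ∧ (a :: l).Nodup ∧ getLast (a :: l) (cons_ne_nil _ _) = b := by
  induction h using Relation.ReflTransGen.head_induction_on with
  | refl => exact ⟨[], .singleton _, nodup_singleton _, rfl⟩
  | @head a c hac _ ih =>
    obtain ⟨l, hchain, hnodup, hlast⟩ := ih
    by_cases ha : a ∈ c :: l
    · obtain ⟨l₁, l₂, hsplit⟩ := append_of_mem ha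
      rw [hsplit] at hchain hnodup
      refine ⟨l₂, hchain.suffix (suffix_append _ _), hnodup.sublist (sublist_append_right _ _), ?_⟩
      simp [← hlast, hsplit]
    · exact ⟨c :: l, .cons_cons hac hchain, nodup_cons.2 ⟨ha, hnodup⟩,
        by rwa [getLast_cons_cons]⟩

theorem Relation.ReflTransGen.exists_injective_fin {α : Type*} {r : α → α → Prop} {a b : α}
    (h : Relation.ReflTransGen r a b) :
    ∃ (k : ℕ) (f : Fin (k + 1) → α), Function.Injective f ∧ f 0 = a ∧ f (Fin.last k) = b ∧
      ∀ i : Fin k, r (f i.castSucc) (f i.succ) := by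
  obtain ⟨l, hchain, hnodup, hlast⟩ := List.exists_nodup_isChain_cons_of_relationReflTransGen h
  refine ⟨l.length, (a :: l).get, List.nodup_iff_injective_get.1 hnodup, rfl, ?_, fun i => ?_⟩
  · rw [← hlast, List.getLast_eq_getElem]
    rfl
  · exact List.isChain_iff_getElem.1 hchain i (by simp)

theorem Fin.sum_univ_castSucc_sub_succ {M : Type*} [AddCommGroup M] {r : ℕ} (f : Fin (r + 1) → M) :
    ∑ k : Fin r, (f k.castSucc - f k.succ) = f 0 - f (Fin.last r) := by
  rw [Finset.sum_sub_distrib, sub_eq_sub_iff_add_eq_add, ← Fin.sum_univ_castSucc,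
    ← Fin.sum_univ_succ]

section Incidence

variable {n m : ℕ} (tail head : Fin m → Fin n)

theorem sum_incidence_apply (R : Finset (Fin n)) (e : Fin m) :
    ∑ i ∈ R, incidence tail head i e =
      (if tail e ∈ R then 1 else 0) - (if head e ∈ R then 1 else 0) := by
  simp only [incidence, Finset.sum_sub_distrib, Finset.sum_ite_eq]

theorem sum_incidence_mulVec (x : Fin m → ℝ) : ∑ i, (incidence tail head *ᵥ x) i = 0 := by
  simp only [mulVec, dotProduct]
  rw [Finset.sum_comm]
  simp [← Finset.sum_mul, sum_incidence_apply]

theorem incidence_mulVec_single (e : Fin m) :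
    incidence tail head *ᵥ Pi.single e 1 = Pi.single (tail e) 1 - Pi.single (head e) 1 := by
  funext i
  simp [mulVec_single, incidence, Pi.single_apply, eq_comm]

def flowStep (x : Fin m → ℤ) (u v : Fin n) : Prop :=
  ∃ e, (x e = 1 ∧ tail e = u ∧ head e = v) ∨ (x e = -1 ∧ tail e = v ∧ head e = u)

theorem sum_incidence_mulVec_nonpos_of_closed {x : Fin m → ℤ}
    (hx : ∀ e, x e = -1 ∨ x e = 0 ∨ x e = 1) {R : Finset (Fin n)}
    (hR : ∀ u v, u ∈ R → flowStep tail head x u v → v ∈ R) :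
    ∑ i ∈ R, (incidence tail head *ᵥ fun e => (x e : ℝ)) i ≤ 0 := by
  simp only [mulVec, dotProduct]
  rw [Finset.sum_comm]
  refine Finset.sum_nonpos fun e _ => ?_
  -- arc `e` contributes `x e * ([tail e ∈ R] - [head e ∈ R])`, which is positive only for
  -- flow leaving `R`, and closedness of `R` rules that out
  rw [← Finset.sum_mul, sum_incidence_apply]
  rcases hx e with h | h | h
  · have : head e ∈ R → tail e ∈ R := fun he => hR _ _ he ⟨e, .inr ⟨h, rfl, rfl⟩⟩
    rw [h]; split_ifs <;> simp_all
  · simp [h]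
  · have : tail e ∈ R → head e ∈ R := fun he => hR _ _ he ⟨e, .inl ⟨h, rfl, rfl⟩⟩
    rw [h]; split_ifs <;> simp_all

theorem reflTransGen_flowStep_of_incidence_mulVec {x : Fin m → ℤ}
    (hx : ∀ e, x e = -1 ∨ x e = 0 ∨ x e = 1) {s t : Fin n}
    (hs : 0 < (incidence tail head *ᵥ fun e => (x e : ℝ)) s)
    (ht : ∀ i ≠ t, 0 ≤ (incidence tail head *ᵥ fun e => (x e : ℝ)) i) :
    Relation.ReflTransGen (flowStep tail head x) s t := by
  classical
  by_contra hst
  set R := Finset.univ.filter (Relation.ReflTransGen (flowStep tail head x) s)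
  have hR : ∀ u v, u ∈ R → flowStep tail head x u v → v ∈ R := by
    simp only [R, Finset.mem_filter, Finset.mem_univ, true_and]
    exact fun u v hu huv => hu.tail huv
  have hsR : s ∈ R := by simp [R, Relation.ReflTransGen.refl]
  have hle := Finset.single_le_sum (fun i hi => ht i (by rintro rfl; simp_all [R])) hsR
  linarith [sum_incidence_mulVec_nonpos_of_closed tail head hx hR]

theorem exists_simplePath_of_reflTransGen_flowStep {x : Fin m → ℤ} {s t : Fin n} (hst : s ≠ t)
    (h : Relation.ReflTransGen (flowStep tail head x) s t) :
    ∃ r, 0 < r ∧ ∃ H : SimplePath n m tail head r,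
      H.vert 0 = s ∧ H.vert (Fin.last r) = t ∧ ∀ k, x (H.arc k) = H.sign k := by
  obtain ⟨r, vert, vert_inj, hstart, hend, hstep⟩ := h.exists_injective_fin
  choose arc harc using hstep
  have arc_inj : Function.Injective arc := by
    intro a b hab
    rcases harc a with ⟨ha, hta, -⟩ | ⟨ha, hta, -⟩ <;>
      rcases harc b with ⟨hb, htb, -⟩ | ⟨hb, htb, -⟩ <;> rw [hab] at ha hta
    · exact Fin.castSucc_injective _ (vert_inj (hta.symm.trans htb))
    · omega
    · omega
    · exact Fin.succ_injective _ (vert_inj (hta.symm.trans htb))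
  have hpos : 0 < r := Nat.pos_of_ne_zero fun hr => hst (by subst hr; rw [← hstart, ← hend]; rfl)
  refine ⟨r, hpos, ⟨arc, fun k => x (arc k), vert, arc_inj, vert_inj, fun k => ?_⟩,
    hstart, hend, fun _ => rfl⟩
  rcases harc k with ⟨h1, h2, h3⟩ | ⟨h1, h2, h3⟩
  exacts [.inl ⟨h1, h2, h3⟩, .inr ⟨h1, h2, h3⟩]

end Incidence

theorem Fmat_mulVec_eq_zero_iff {n m : ℕ} (A : Matrix (Fin n) (Fin m) ℝ)
    (v : Fin m ⊕ Fin n ⊕ Fin n → ℝ) :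
    Fmat A *ᵥ v = 0 ↔
      A *ᵥ (fun e => v (.inl e)) = (fun i => v (.inr (.inl i))) - fun i => v (.inr (.inr i)) := by
  simp only [funext_iff, Pi.zero_apply, Pi.sub_apply, mulVec, dotProduct, Fintype.sum_sum_type,
    Fmat, Sum.elim_inl, Sum.elim_inr, ite_mul, neg_mul, one_mul, zero_mul, Finset.sum_ite_eq,
    Finset.mem_univ, if_true]
  exact forall_congr' fun i => by constructor <;> intro h <;> linarith

theorem sum_slack_eq_of_Fmat_incidence_mulVec_eq_zero {n m : ℕ} {tail head : Fin m → Fin n}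
    {v : Fin m ⊕ Fin n ⊕ Fin n → ℝ} (hv : Fmat (incidence tail head) *ᵥ v = 0) :
    ∑ i, v (.inr (.inl i)) = ∑ i, v (.inr (.inr i)) := by
  have hsum := congrArg (fun w => ∑ i, w i) ((Fmat_mulVec_eq_zero_iff _ v).1 hv)
  simp only [sum_incidence_mulVec, Pi.sub_apply, Finset.sum_sub_distrib] at hsum
  linarith

theorem IsCircuitOf.eq_of_forall_eq_zero_or_eq {n m : ℕ} {A : Matrix (Fin n) (Fin m) ℝ}
    {g h : Fin m ⊕ Fin n ⊕ Fin n → ℤ} (hg : IsCircuitOf A g) (hh : h ≠ 0)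
    (hker : Fmat A *ᵥ (fun v => (h v : ℝ)) = 0) (hagree : ∀ v, h v = 0 ∨ h v = g v) :
    g = h := by
  have hsupp : {v | g v ≠ 0} ⊆ {v | (h v : ℝ) ≠ 0} := by
    refine hg.2.2.2 _ (fun h0 => hh (funext fun v => by simpa using congrFun h0 v)) hker
      fun v hv => ?_
    rcases hagree v with h0 | hgv <;> simp_all
  funext v
  rcases hagree v with h0 | hgv
  · rw [h0]
    by_contra hne
    exact hsupp hne (by simp [h0])
  · exact hgv.symm

namespace SimplePath

variable {n m r : ℕ} {tail head : Fin m → Fin n} (H : SimplePath n m tail head r)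

theorem vec_arc (k : Fin r) : H.vec (H.arc k) = H.sign k := by
  simp [vec, H.arc_inj.eq_iff]

theorem vec_eq_zero {e : Fin m} (he : ∀ k, H.arc k ≠ e) : H.vec e = 0 :=
  Finset.sum_eq_zero fun k _ => if_neg (he k)

theorem cast_vec : (fun e => (H.vec e : ℝ)) = ∑ k, (H.sign k : ℝ) • Pi.single (H.arc k) 1 := by
  funext e
  simp [vec, Finset.sum_apply, Pi.single_apply, eq_comm]

theorem incidence_mulVec_vec :
    incidence tail head *ᵥ (fun e => (H.vec e : ℝ)) =
      Pi.single (H.vert 0) 1 - Pi.single (H.vert (Fin.last r)) 1 := by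
  rw [cast_vec, mulVec_sum]
  refine (Finset.sum_congr rfl fun k _ => ?_).trans
    (Fin.sum_univ_castSucc_sub_succ fun j => Pi.single (H.vert j) 1)
  rw [mulVec_smul, incidence_mulVec_single]
  rcases H.step k with ⟨h1, h2, h3⟩ | ⟨h1, h2, h3⟩ <;> simp [h1, h2, h3]

def pathCircuit : Fin m ⊕ Fin n ⊕ Fin n → ℤ :=
  Sum.elim H.vec (Sum.elim (Pi.single (H.vert 0) 1) (Pi.single (H.vert (Fin.last r)) 1))

theorem pathCircuit_ne_zero : H.pathCircuit ≠ 0 :=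
  fun h => by simpa [pathCircuit] using congrFun h (.inr (.inl (H.vert 0)))

theorem Fmat_mulVec_pathCircuit :
    Fmat (incidence tail head) *ᵥ (fun v => (H.pathCircuit v : ℝ)) = 0 := by
  rw [Fmat_mulVec_eq_zero_iff]
  simp only [pathCircuit, Sum.elim_inl, Sum.elim_inr, H.incidence_mulVec_vec]
  funext i
  simp [Pi.single_apply, apply_ite (Int.cast : ℤ → ℝ)]

end SimplePath

theorem IsCircuitOf.exists_simplePath {n m : ℕ} {tail head : Fin m → Fin n}
    {g : Fin m ⊕ Fin n ⊕ Fin n → ℤ} (hg : IsCircuitOf (incidence tail head) g) {s t : Fin n}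
    (hst : s ≠ t) (hpm : ∀ e, g (.inl e) = -1 ∨ g (.inl e) = 0 ∨ g (.inl e) = 1)
    (hp : ∀ i, g (.inr (.inl i)) = (Pi.single s 1 : Fin n → ℤ) i)
    (hq : ∀ i, g (.inr (.inr i)) = (Pi.single t 1 : Fin n → ℤ) i) :
    ∃ r, 0 < r ∧ ∃ H : SimplePath n m tail head r,
      H.vert 0 = s ∧ H.vert (Fin.last r) = t ∧ ∀ e, g (.inl e) = H.vec e := by
  have hflow : incidence tail head *ᵥ (fun e => (g (.inl e) : ℝ)) =
      Pi.single s 1 - Pi.single t 1 := by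
    rw [(Fmat_mulVec_eq_zero_iff _ _).1 hg.2.1]
    funext i
    simp [hp, hq, Pi.single_apply, apply_ite (Int.cast : ℤ → ℝ)]
  have hreach := reflTransGen_flowStep_of_incidence_mulVec tail head hpm (s := s) (t := t)
    (by simp [hflow, hst]) fun i hi => by by_cases his : i = s <;> simp [hflow, hi, his, hst]
  obtain ⟨r, hr, H, hstart, hend, hsign⟩ :=
    exists_simplePath_of_reflTransGen_flowStep tail head hst hreach
  have hagree : ∀ v, H.pathCircuit v = 0 ∨ H.pathCircuit v = g v := by
    rintro (e | i | i)
    · by_cases he : ∃ k, H.arc k = e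
      · obtain ⟨k, rfl⟩ := he
        exact .inr (by simp [SimplePath.pathCircuit, H.vec_arc, hsign])
      · exact .inl (H.vec_eq_zero (not_exists.1 he))
    · exact .inr (by simp [SimplePath.pathCircuit, hp, hstart])
    · exact .inr (by simp [SimplePath.pathCircuit, hq, hend])
  have hcirc := hg.eq_of_forall_eq_zero_or_eq H.pathCircuit_ne_zero H.Fmat_mulVec_pathCircuit hagree
  exact ⟨r, hr, H, hstart, hend, fun e => congrFun hcirc (.inl e)⟩

theorem sum_stCost_mul {n m : ℕ} (M : ℝ) (s t : Fin n) (v : Fin m ⊕ Fin n ⊕ Fin n → ℝ) :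
    ∑ w, Sum.elim (fun _ => (0 : ℝ))
        (Sum.elim (fun i => -M + (1 + M) * (Pi.single s 1 : Fin n → ℝ) i)
          (fun i => -M + (1 + M) * (Pi.single t 1 : Fin n → ℝ) i)) w * v w =
      -M * (∑ i, v (.inr (.inl i)) + ∑ i, v (.inr (.inr i))) +
        (1 + M) * (v (.inr (.inl s)) + v (.inr (.inr t))) := by
  simp only [Pi.single_apply, mul_ite, mul_one, mul_zero, Fintype.sum_sum_type, Sum.elim_inl,
    zero_mul, Finset.sum_const_zero, Sum.elim_inr, add_mul, neg_mul, ite_mul, one_mul,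
    Finset.sum_add_distrib, Finset.sum_neg_distrib, ← Finset.mul_sum, Finset.sum_ite_eq',
    Finset.mem_univ, ↓reduceIte, zero_add]
  ring

theorem eq_single_of_nonneg_of_sum_eq {ι M : Type*} [Fintype ι] [DecidableEq ι] [AddCommMonoid M]
    [PartialOrder M] [IsOrderedCancelAddMonoid M] {p : ι → M} (hp : 0 ≤ p) {s : ι}
    (hsum : ∑ i, p i = p s) : p = Pi.single s (p s) := by
  rw [← Finset.add_sum_erase _ _ (Finset.mem_univ s), add_eq_left,
    Finset.sum_eq_zero_iff_of_nonneg fun i _ => hp i] at hsum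
  funext i
  by_cases hi : i = s
  · subst hi; simp
  · simp [hi, hsum i (by simp [hi])]

-- `P` is the common total of the two slack blocks, `a = p_s` and `b = q_t`.
theorem eq_one_of_stCost_pos {M : ℝ} (hM : 1 < M) {P a b : ℤ} (ha : a ≤ 1) (hb : b ≤ 1)
    (haP : a ≤ P) (hbP : b ≤ P) (hpos : 0 < -M * (2 * P) + (1 + M) * (a + b)) :
    P = 1 ∧ a = 1 ∧ b = 1 := by
  have hP : P = 1 := by
    rcases lt_trichotomy P 1 with hP | hP | hP
    · have : (P : ℝ) ≤ 0 := by exact_mod_cast Int.lt_add_one_iff.1 hP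
      have : (a : ℝ) ≤ P := by exact_mod_cast haP
      have : (b : ℝ) ≤ P := by exact_mod_cast hbP
      nlinarith
    · exact hP
    · have : (2 : ℝ) ≤ P := by exact_mod_cast hP
      have : (a : ℝ) ≤ 1 := by exact_mod_cast ha
      have : (b : ℝ) ≤ 1 := by exact_mod_cast hb
      nlinarith
  subst hP
  have hab : 1 < a + b := by
    by_contra! hab
    have : ((a + b : ℤ) : ℝ) ≤ 1 := by exact_mod_cast hab
    push_cast at this hpos
    nlinarith
  omega

theorem eq_single_of_stCost_pos {n : ℕ} {M : ℝ} (hM : 1 < M) {p q : Fin n → ℤ} (hp : 0 ≤ p)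
    (hq : 0 ≤ q) {s t : Fin n} (hps : p s ≤ 1) (hqt : q t ≤ 1) (hpq : ∑ i, p i = ∑ i, q i)
    (hpos : 0 < -M * (∑ i, (p i : ℝ) + ∑ i, (q i : ℝ)) + (1 + M) * (p s + q t)) :
    p = Pi.single s 1 ∧ q = Pi.single t 1 := by
  have hqp : ∑ i, (q i : ℝ) = ∑ i, (p i : ℝ) := by exact_mod_cast hpq.symm
  obtain ⟨hP, hs, ht⟩ := eq_one_of_stCost_pos hM hps hqt
    (Finset.single_le_sum (fun i _ => hp i) (Finset.mem_univ s))
    (hpq ▸ Finset.single_le_sum (fun i _ => hq i) (Finset.mem_univ t))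
    (by rw [hqp] at hpos; push_cast; linarith)
  constructor
  · rw [← hs]; exact eq_single_of_nonneg_of_sum_eq hp (hP.trans hs.symm)
  · rw [← ht]; exact eq_single_of_nonneg_of_sum_eq hq (hpq ▸ hP.trans ht.symm)

/-- with cost `c = (0_m, -M·1 + (1+M)e_s, -M·1 + (1+M)e_t)`
(`M > 3`), among circuits `g` with `{-1,0,1}` entries that do not decrease any
slack variable, the improving ones (`c ᵀ g > 0`) are exactly the path circuits
`(H_{st}, e_s, e_t)` for an undirected `s–t` path `H_{st}`, and every such
circuit has `c ᵀ g = 2`. -/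
theorem improving_circuits_are_st_paths {n m : ℕ} (tail head : Fin m → Fin n)
    (s t : Fin n) (hst : s ≠ t) (M : ℝ) (hM : 3 < M)
    (c : Fin m ⊕ Fin n ⊕ Fin n → ℝ)
    (hc : c = Sum.elim (fun _ => (0 : ℝ))
      (Sum.elim (fun i => -M + (1 + M) * (Pi.single s 1 : Fin n → ℝ) i)
        (fun i => -M + (1 + M) * (Pi.single t 1 : Fin n → ℝ) i)))
    (g : Fin m ⊕ Fin n ⊕ Fin n → ℤ)
    (hg : IsCircuitOf (incidence tail head) g)
    (hpm : ∀ v, g v = -1 ∨ g v = 0 ∨ g v = 1)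
    (hgp : ∀ i, 0 ≤ g (Sum.inr (Sum.inl i)))
    (hgm : ∀ i, 0 ≤ g (Sum.inr (Sum.inr i))) :
    (0 < ∑ v, c v * (g v : ℝ) ↔
      ∃ r : ℕ, 0 < r ∧ ∃ H : SimplePath n m tail head r,
        H.vert 0 = s ∧ H.vert (Fin.last r) = t ∧
        (∀ e, g (Sum.inl e) = H.vec e) ∧
        (∀ i, g (Sum.inr (Sum.inl i)) = (Pi.single s 1 : Fin n → ℤ) i) ∧
        (∀ i, g (Sum.inr (Sum.inr i)) = (Pi.single t 1 : Fin n → ℤ) i)) ∧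
    (0 < ∑ v, c v * (g v : ℝ) → ∑ v, c v * (g v : ℝ) = 2) := by
  set p : Fin n → ℤ := fun i => g (.inr (.inl i))
  set q : Fin n → ℤ := fun i => g (.inr (.inr i))
  have hcost : ∑ v, c v * (g v : ℝ) =
      -M * (∑ i, (p i : ℝ) + ∑ i, (q i : ℝ)) + (1 + M) * (p s + q t) := by
    subst hc
    exact sum_stCost_mul M s t _
  have hpq : ∑ i, p i = ∑ i, q i := by
    exact_mod_cast sum_slack_eq_of_Fmat_incidence_mulVec_eq_zero hg.2.1
  have hle : ∀ v, g v ≤ 1 := fun v => by rcases hpm v with h | h | h <;> omega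
  have hsingle : 0 < ∑ v, c v * (g v : ℝ) → p = Pi.single s 1 ∧ q = Pi.single t 1 :=
    fun hpos => eq_single_of_stCost_pos (by linarith) hgp hgm (hle _) (hle _) hpq (hcost ▸ hpos)
  have htwo : p = Pi.single s 1 → q = Pi.single t 1 → ∑ v, c v * (g v : ℝ) = 2 := by
    intro hp hq
    rw [hcost, hp, hq]
    simp only [Pi.single_apply, apply_ite (Int.cast : ℤ → ℝ), Int.cast_one, Int.cast_zero,
      Finset.sum_ite_eq', Finset.mem_univ, ↓reduceIte]
    ring
  refine ⟨⟨fun hpos => ?_, ?_⟩, fun hpos => htwo (hsingle hpos).1 (hsingle hpos).2⟩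
  · obtain ⟨hp, hq⟩ := hsingle hpos
    obtain ⟨r, hr, H, hstart, hend, hvec⟩ :=
      hg.exists_simplePath hst (fun e => hpm _) (congrFun hp) (congrFun hq)
    exact ⟨r, hr, H, hstart, hend, hvec, congrFun hp, congrFun hq⟩
  · rintro ⟨-, -, -, -, -, -, hp, hq⟩
    rw [htwo (funext hp) (funext hq)]
    norm_num
end
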